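/- arXiv:alg-geom/9709010 — 7 statements merged into one kernel-verified Lean document; each statement's English description precedes it below -/
import Mathlib

section
/- Let Σ be a complete regular fan in N_ℝ (dim N_ℝ = d) with Σ₁ the set of primitive generators of its one-dimensional cones, and let φ be a Σ-piecewise linear complex-valued function with Re(φ(e)) > 0 for all e ∈ Σ₁. Let q > 1 and let χ : N → S¹ be a group homomorphism. Then ∑_{n ∈ N} q^{−φ(n)} χ(n) converges absolutely and equals ∑_{σ ∈ Σ} ∏_{e ∈ σ ∩ Σ₁} (χ(e) q^{−φ(e)}) / (1 − χ(e) q^{−φ(e)}). -/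
/-- The cone in `ℝ^d` generated by a finite set `s` of lattice vectors. -/
def coneOf {d : ℕ} (s : Finset (Fin d → ℤ)) : Set (Fin d → ℝ) :=
  {x | ∃ c : (Fin d → ℤ) → ℝ, (∀ e, 0 ≤ c e) ∧ x = ∑ e ∈ s, c e • (fun j => (e j : ℝ))}

/-- A complete regular fan in `ℝ^d`, encoded by the finite sets of primitive generators of
its cones: each generating set extends to a `ℤ`-basis of the lattice (regularity), the
collection is closed under passing to subsets (faces), and the relative interiors of the
cones partition the space (in particular the fan is complete). -/
structure IsCompleteRegularFanGens {d : ℕ} (F : Finset (Finset (Fin d → ℤ))) : Prop where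
  regular : ∀ s ∈ F, ∃ b : Module.Basis (Fin d) ℤ (Fin d → ℤ), (s : Set (Fin d → ℤ)) ⊆ Set.range b
  downward : ∀ s ∈ F, ∀ t ⊆ s, t ∈ F
  partition : ∀ x : Fin d → ℝ, ∃! s, s ∈ F ∧ x ∈ intrinsicInterior ℝ (coneOf s)

/-- `φ` is piecewise linear with respect to the fan: on each cone it agrees with an
`ℝ`-linear function (with values in `ℂ`). -/
def IsPL {d : ℕ} (F : Finset (Finset (Fin d → ℤ))) (φ : (Fin d → ℝ) → ℂ) : Prop :=
  ∀ s ∈ F, ∃ l : (Fin d → ℝ) →ₗ[ℝ] ℂ, ∀ x ∈ coneOf s, φ x = l x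

/-!
The relative interiors of the cones of `Σ` partition `N_ℝ`, and for a regular cone `σ` the lattice
points in its relative interior are exactly the sums `∑_{e ∈ σ} (m_e + 1) e` with `m ∈ ℕ^σ`: their
real coefficients along `σ` are coordinates in a `ℤ`-basis extending `σ`, hence positive integers.
Because `φ` is linear on `σ` and `χ` is a character, the summand `f(n) = q^{-φ(n)} χ(n)` is
multiplicative on the lattice points of `σ`, so the sum over the relative interior of `σ` is the
product of the geometric series `∑_{m ≥ 1} f(e)^m = f(e) / (1 - f(e))`, which converge absolutely
since `‖f(e)‖ = q^{-Re φ(e)} < 1`. Summing over the finitely many cones gives the claim.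
-/

open Set Function
open Module (Basis)

theorem intrinsicInterior_eq_interior_of_affineSpan_eq_top {𝕜 V P : Type*} [Ring 𝕜]
    [AddCommGroup V] [Module 𝕜 V] [TopologicalSpace P] [AddTorsor V P] {s : Set P}
    (h : affineSpan 𝕜 s = ⊤) : intrinsicInterior 𝕜 s = interior s := by
  have hopen : IsOpen (affineSpan 𝕜 s : Set P) := by simp [h]
  have hval := hopen.isOpenEmbedding_subtypeVal.isOpenMap.preimage_interior_eq_interior_preimage
    continuous_subtype_val (s := s)
  rw [intrinsicInterior]
  erw [← hval]
  rw [Subtype.image_preimage_coe, h, AffineSubspace.top_coe, univ_inter]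

theorem LinearIndependent.intrinsicInterior_image_pi_Ici {ι E : Type*} [Fintype ι]
    [NormedAddCommGroup E] [NormedSpace ℝ E] {v : ι → E} (hv : LinearIndependent ℝ v) :
    intrinsicInterior ℝ (Fintype.linearCombination ℝ v '' univ.pi fun _ => Ici 0) =
      Fintype.linearCombination ℝ v '' univ.pi fun _ => Ioi 0 := by
  let L : (ι → ℝ) ≃ₗ[ℝ] Submodule.span ℝ (range v) := (Basis.span hv).equivFun.symm
  have hL : ⇑(Fintype.linearCombination ℝ v) =
      (Submodule.span ℝ (range v)).subtypeₗᵢ.toAffineIsometry ∘ L.toAffineEquiv := by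
    ext c
    simp [L, Basis.span_apply, Fintype.linearCombination_apply]
  have hint : interior (univ.pi fun _ : ι => Ici (0 : ℝ)) = univ.pi fun _ => Ioi 0 := by
    simp only [interior_pi_set finite_univ, interior_Ici]
  have hspan : affineSpan ℝ (univ.pi fun _ : ι => Ici (0 : ℝ)) = ⊤ :=
    affineSpan_eq_top_of_nonempty_interior
      ⟨1, interior_mono (subset_convexHull ℝ _) (hint ▸ mem_univ_pi.2 fun _ => mem_Ioi.2 one_pos)⟩
  rw [hL, image_comp, image_comp, AffineIsometry.intrinsicInterior_image,
    AffineEquiv.intrinsicInterior_image, intrinsicInterior_eq_interior_of_affineSpan_eq_top hspan,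
    hint]

theorem hasSum_prod_fin_pi {R κ : Type*} [NormedCommRing R] [CompleteSpace R] (n : ℕ)
    {f : Fin n → κ → R} {a : Fin n → R}
    (hnorm : ∀ i, Summable fun k => ‖f i k‖) (hsum : ∀ i, HasSum (f i) (a i)) :
    Summable (fun m : Fin n → κ => ‖∏ i, f i (m i)‖) ∧
      HasSum (fun m : Fin n → κ => ∏ i, f i (m i)) (∏ i, a i) := by
  induction n with
  | zero =>
    simp only [Finset.univ_eq_empty, Finset.prod_empty]
    exact ⟨.of_finite, hasSum_unique _⟩
  | succ n ih =>
    obtain ⟨htail_norm, htail⟩ := ih (fun i => hnorm i.succ) (fun i => hsum i.succ)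
    let e : (Fin (n + 1) → κ) ≃ κ × (Fin n → κ) := (Fin.consEquiv fun _ => κ).symm
    have hsplit : ∀ m : Fin (n + 1) → κ,
        ∏ i, f i (m i) = f 0 (e m).1 * ∏ i : Fin n, f i.succ ((e m).2 i) :=
      fun m => Fin.prod_univ_succ _
    have hnorm_prod := (hnorm 0).mul_norm htail_norm
    have hsum_prod := (hsum 0).mul htail hnorm_prod.of_norm
    have h1 := e.summable_iff.2 hnorm_prod
    have h2 := e.hasSum_iff.2 hsum_prod
    simp only [hsplit, Fin.prod_univ_succ a]
    exact ⟨h1, h2⟩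

theorem hasSum_prod_pi {R ι κ : Type*} [NormedCommRing R] [CompleteSpace R] [Fintype ι]
    {f : ι → κ → R} {a : ι → R}
    (hnorm : ∀ i, Summable fun k => ‖f i k‖) (hsum : ∀ i, HasSum (f i) (a i)) :
    Summable (fun m : ι → κ => ‖∏ i, f i (m i)‖) ∧
      HasSum (fun m : ι → κ => ∏ i, f i (m i)) (∏ i, a i) := by
  let σ := (Fintype.equivFin ι).symm
  obtain ⟨hn, hs⟩ := hasSum_prod_fin_pi _ (fun i => hnorm (σ i)) (fun i => hsum (σ i))
  let e : (ι → κ) ≃ (Fin (Fintype.card ι) → κ) := σ.symm.arrowCongr (Equiv.refl κ)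
  have hprod : ∀ m : ι → κ, ∏ i, f (σ i) (e m i) = ∏ i, f i (m i) := fun m =>
    σ.prod_comp fun i => f i (m i)
  rw [σ.prod_comp] at hs
  have h1 := e.summable_iff.2 hn
  have h2 := e.hasSum_iff.2 hs
  simp only [Function.comp_def, hprod] at h1 h2
  exact ⟨h1, h2⟩

theorem hasSum_pow_succ_of_norm_lt_one {K : Type*} [NormedDivisionRing K] {w : K}
    (hw : ‖w‖ < 1) : HasSum (fun k : ℕ => w ^ (k + 1)) (w / (1 - w)) := by
  simpa only [← pow_succ', ← div_eq_mul_inv] using (hasSum_geometric_of_norm_lt_one hw).mul_left w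

theorem summable_norm_pow_succ_of_norm_lt_one {K : Type*} [NormedDivisionRing K] {w : K}
    (hw : ‖w‖ < 1) : Summable fun k : ℕ => ‖w ^ (k + 1)‖ := by
  simpa only [norm_pow] using
    (summable_nat_add_iff 1).2 (summable_geometric_of_lt_one (norm_nonneg w) hw)

theorem AddChar.map_sum_eq_prod {A M ι : Type*} [AddCommMonoid A] [CommMonoid M]
    (ψ : AddChar A M) (s : Finset ι) (f : ι → A) : ψ (∑ i ∈ s, f i) = ∏ i ∈ s, ψ (f i) := by
  classical
  induction s using Finset.cons_induction with
  | empty => simp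
  | cons a s ha ih => rw [Finset.sum_cons, Finset.prod_cons, AddChar.map_add_eq_mul, ih]

section Lattice

variable {ι : Type*}

/-- By definition `castVec n` is `fun j => (n j : ℝ)`, the form used in the statement. -/
def castVec : (ι → ℤ) →+ (ι → ℝ) := (Int.castAddHom ℝ).compLeft ι

theorem castVec_apply (n : ι → ℤ) (j : ι) : castVec n j = n j := rfl

theorem castVec_injective : Injective (castVec : (ι → ℤ) → ι → ℝ) :=
  fun _ _ h => funext fun j => Int.cast_injective (congrFun h j)

theorem castVec_sum_nsmul {κ : Type*} [Fintype κ] (k : κ → ℕ) (v : κ → ι → ℤ) :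
    castVec (∑ i, k i • v i) = ∑ i, (k i : ℝ) • castVec (v i) := by
  simp only [map_sum, map_nsmul, Nat.cast_smul_eq_nsmul]

variable [Fintype ι]

theorem castVec_eq_sum_repr (b : Basis ι ℤ (ι → ℤ)) (n : ι → ℤ) :
    castVec n = ∑ i, (b.repr n i : ℝ) • castVec (b i) := by
  conv_lhs => rw [← b.sum_repr n]
  simp only [map_sum, map_zsmul, Int.cast_smul_eq_zsmul]

theorem top_le_span_castVec (b : Basis ι ℤ (ι → ℤ)) :
    ⊤ ≤ Submodule.span ℝ (range fun i => castVec (b i)) := by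
  classical
  rw [← (Pi.basisFun ℝ ι).span_eq, Submodule.span_le]
  rintro _ ⟨j, rfl⟩
  have : Pi.basisFun ℝ ι j = castVec (Pi.single j 1) := by
    ext k
    simp [castVec_apply, Pi.single_apply, apply_ite]
  rw [this, castVec_eq_sum_repr b]
  exact Submodule.sum_mem _ fun i _ => Submodule.smul_mem _ _ (Submodule.subset_span ⟨i, rfl⟩)

noncomputable def Module.Basis.castReal (b : Basis ι ℤ (ι → ℤ)) : Basis ι ℝ (ι → ℝ) :=
  .mk (linearIndependent_of_top_le_span_of_card_eq_finrank (top_le_span_castVec b) (by simp))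
    (top_le_span_castVec b)

theorem Module.Basis.castReal_apply (b : Basis ι ℤ (ι → ℤ)) (i : ι) :
    b.castReal i = castVec (b i) :=
  Basis.mk_apply ..

theorem Module.Basis.castReal_repr_castVec (b : Basis ι ℤ (ι → ℤ)) (n : ι → ℤ) (i : ι) :
    b.castReal.repr (castVec n) i = b.repr n i := by
  simp only [castVec_eq_sum_repr b n, ← b.castReal_apply, Basis.repr_sum_self]

end Lattice

theorem Module.Basis.repr_sum_smul_apply_of_injective {ι κ R M : Type*} [Semiring R]
    [AddCommMonoid M] [Module R M] [Fintype κ] (B : Basis ι R M) {j : κ → ι}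
    (hj : Function.Injective j) (c : κ → R) (k : κ) : B.repr (∑ x, c x • B (j x)) (j k) = c k := by
  classical
  simp [map_sum, Finsupp.single_apply, hj.eq_iff]

theorem injective_sum_succ_nsmul {M : Type*} [AddCommGroup M] {s : Finset M}
    (hs : LinearIndependent ℤ fun e : s => (e : M)) :
    Injective fun m : s → ℕ => ∑ e, (m e + 1) • (e : M) := by
  have hcomb : ∀ m : s → ℕ, ∑ e, (m e + 1) • (e : M) =
      Fintype.linearCombination ℤ (fun e : s => (e : M)) fun e => ((m e + 1 : ℕ) : ℤ) :=
    fun m => by simp only [Fintype.linearCombination_apply, natCast_zsmul]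
  intro m m' h
  simp only [hcomb] at h
  funext e
  have := congrFun (hs.fintypeLinearCombination_injective h) e
  omega

section Cone

variable {d : ℕ}

theorem coneOf_eq_image (s : Finset (Fin d → ℤ)) :
    coneOf s = Fintype.linearCombination ℝ (fun e : s => castVec (e : Fin d → ℤ)) ''
      univ.pi fun _ => Ici 0 := by
  classical
  ext x
  simp only [coneOf, mem_image, mem_univ_pi, mem_Ici, Fintype.linearCombination_apply]
  constructor
  · rintro ⟨c, hc, rfl⟩
    exact ⟨fun e => c e, fun e => hc e, Finset.sum_coe_sort s fun e => c e • castVec e⟩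
  · rintro ⟨c, hc, rfl⟩
    refine ⟨fun e => if h : e ∈ s then c ⟨e, h⟩ else 0, fun e => ?_, ?_⟩
    · dsimp only
      split_ifs <;> simp [hc]
    · rw [← Finset.sum_coe_sort s]
      simp only [Finset.coe_mem, dif_pos]
      rfl

theorem castVec_sum_nsmul_mem_coneOf (s : Finset (Fin d → ℤ)) (k : s → ℕ) :
    castVec (∑ e : s, k e • (e : Fin d → ℤ)) ∈ coneOf s := by
  rw [castVec_sum_nsmul, coneOf_eq_image]
  exact ⟨fun e => k e, fun e _ => mem_Ici.2 (Nat.cast_nonneg (k e)),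
    Fintype.linearCombination_apply ..⟩

theorem castVec_mem_intrinsicInterior_coneOf_iff {s : Finset (Fin d → ℤ)}
    {b : Basis (Fin d) ℤ (Fin d → ℤ)} (hs : (s : Set (Fin d → ℤ)) ⊆ range b) (n : Fin d → ℤ) :
    castVec n ∈ intrinsicInterior ℝ (coneOf s) ↔
      ∃ m : s → ℕ, ∑ e, (m e + 1) • (e : Fin d → ℤ) = n := by
  choose j hj using fun e : s => hs e.2
  have hj_inj : Injective j := fun e e' h => Subtype.ext (by rw [← hj e, ← hj e', h])
  have hv : ∀ e : s, castVec (e : Fin d → ℤ) = b.castReal (j e) := fun e => by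
    rw [b.castReal_apply, hj]
  have hli : LinearIndependent ℝ fun e : s => castVec (e : Fin d → ℤ) := by
    rw [show (fun e : s => castVec (e : Fin d → ℤ)) = b.castReal ∘ j from funext hv]
    exact b.castReal.linearIndependent.comp j hj_inj
  rw [coneOf_eq_image, hli.intrinsicInterior_image_pi_Ici]
  simp only [mem_image, mem_univ_pi, mem_Ioi]
  constructor
  · rintro ⟨c, hc, hcn⟩
    have hcoord : ∀ e, c e = b.repr n (j e) := fun e => by
      rw [← b.castReal_repr_castVec, ← hcn, Fintype.linearCombination_apply]
      simp only [hv]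
      exact (b.castReal.repr_sum_smul_apply_of_injective hj_inj c e).symm
    choose m hm using fun e => Int.eq_succ_of_zero_lt (by exact_mod_cast hcoord e ▸ hc e)
    refine ⟨m, castVec_injective ?_⟩
    rw [← hcn, castVec_sum_nsmul, Fintype.linearCombination_apply]
    refine Finset.sum_congr rfl fun e _ => ?_
    rw [hcoord, hm]
    push_cast
    rfl
  · rintro ⟨m, rfl⟩
    refine ⟨fun e => m e + 1, fun e => Nat.cast_add_one_pos (m e), ?_⟩
    rw [castVec_sum_nsmul, Fintype.linearCombination_apply]
    push_cast
    rfl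

end Cone

theorem hasSum_sum_succ_nsmul {M 𝕜 : Type*} [AddCommMonoid M] [NormedField 𝕜] [CompleteSpace 𝕜]
    {s : Finset M} {f : M → 𝕜}
    (hmul : ∀ k : s → ℕ, f (∑ e : s, k e • (e : M)) = ∏ e : s, f e ^ k e)
    (hlt : ∀ e ∈ s, ‖f e‖ < 1) :
    Summable (fun m : s → ℕ => ‖f (∑ e, (m e + 1) • (e : M))‖) ∧
      HasSum (fun m : s → ℕ => f (∑ e, (m e + 1) • (e : M))) (∏ e ∈ s, f e / (1 - f e)) := by
  have h := hasSum_prod_pi (f := fun (e : s) (k : ℕ) => f e ^ (k + 1))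
    (fun e => summable_norm_pow_succ_of_norm_lt_one (hlt e e.2))
    (fun e => hasSum_pow_succ_of_norm_lt_one (hlt e e.2))
  simpa only [hmul, ← Finset.prod_coe_sort s] using h

namespace IsCompleteRegularFanGens

variable {d : ℕ} {F : Finset (Finset (Fin d → ℤ))}

theorem bijective_sum_succ_nsmul (hF : IsCompleteRegularFanGens F) :
    Bijective fun t : (s : F) × (s.1 → ℕ) => ∑ e, (t.2 e + 1) • (e : Fin d → ℤ) := by
  constructor
  · rintro ⟨s, m⟩ ⟨s', m'⟩ h
    obtain ⟨b, hb⟩ := hF.regular s.1 s.2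
    obtain ⟨b', hb'⟩ := hF.regular s'.1 s'.2
    obtain rfl : s = s' := Subtype.ext <| (hF.partition (castVec _)).unique
      ⟨s.2, (castVec_mem_intrinsicInterior_coneOf_iff hb _).2 ⟨m, rfl⟩⟩
      ⟨s'.2, (castVec_mem_intrinsicInterior_coneOf_iff hb' _).2 ⟨m', h.symm⟩⟩
    obtain rfl : m = m' := injective_sum_succ_nsmul
      (((linearIndepOn_id_range_iff b.injective).2 b.linearIndependent).mono hb) h
    rfl
  · intro n
    obtain ⟨s, ⟨hs, hn⟩, -⟩ := hF.partition (castVec n)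
    obtain ⟨b, hb⟩ := hF.regular s hs
    obtain ⟨m, hm⟩ := (castVec_mem_intrinsicInterior_coneOf_iff hb n).1 hn
    exact ⟨⟨⟨s, hs⟩, m⟩, hm⟩

theorem hasSum_sum_prod_div_one_sub (hF : IsCompleteRegularFanGens F) {𝕜 : Type*}
    [NormedField 𝕜] [CompleteSpace 𝕜] {f : (Fin d → ℤ) → 𝕜}
    (hmul : ∀ s ∈ F, ∀ k : s → ℕ, f (∑ e : s, k e • (e : Fin d → ℤ)) = ∏ e : s, f e ^ k e)
    (hlt : ∀ s ∈ F, ∀ e ∈ s, ‖f e‖ < 1) :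
    Summable (fun n => ‖f n‖) ∧ HasSum f (∑ s ∈ F, ∏ e ∈ s, f e / (1 - f e)) := by
  let E := Equiv.ofBijective _ hF.bijective_sum_succ_nsmul
  have hfiber := fun s : F => hasSum_sum_succ_nsmul (hmul s.1 s.2) (hlt s.1 s.2)
  have hnorm : Summable fun n => ‖f n‖ := E.summable_iff.1 <|
    (summable_sigma_of_nonneg fun _ => norm_nonneg _).2 ⟨fun s => (hfiber s).1, .of_finite⟩
  have hsigma := (E.hasSum_iff.2 hnorm.of_norm.hasSum).sigma fun s => (hfiber s).2
  rw [← Finset.sum_coe_sort F, (hasSum_fintype _).unique hsigma]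
  exact ⟨hnorm, hnorm.of_norm.hasSum⟩

end IsCompleteRegularFanGens

theorem exp_mul_addChar_sum_nsmul {d : ℕ} {s : Finset (Fin d → ℤ)} {φ : (Fin d → ℝ) → ℂ}
    {l : (Fin d → ℝ) →ₗ[ℝ] ℂ} (hl : ∀ x ∈ coneOf s, φ x = l x) (L : ℂ)
    (χ : AddChar (Fin d → ℤ) ℂ) (k : s → ℕ) :
    Complex.exp (-φ (castVec (∑ e : s, k e • (e : Fin d → ℤ))) * L) *
        χ (∑ e : s, k e • (e : Fin d → ℤ)) =
      ∏ e : s, (Complex.exp (-φ (castVec (e : Fin d → ℤ)) * L) * χ e) ^ k e := by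
  classical
  have hgen : ∀ e : s, φ (castVec (e : Fin d → ℤ)) = l (castVec e) := fun e => hl _ <| by
    rw [coneOf_eq_image]
    exact ⟨Pi.single e 1,
      fun x _ => (Pi.single_nonneg.2 zero_le_one : (0 : s → ℝ) ≤ Pi.single e 1) x,
      by rw [Fintype.linearCombination_apply_single, one_smul]⟩
  have hφ : φ (castVec (∑ e : s, k e • (e : Fin d → ℤ))) = ∑ e, (k e : ℂ) * φ (castVec e) := by
    rw [hl _ (castVec_sum_nsmul_mem_coneOf s k), castVec_sum_nsmul, map_sum]
    simp only [map_smul, hgen, Complex.real_smul, Complex.ofReal_natCast]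
  rw [hφ, AddChar.map_sum_eq_prod, ← Finset.sum_neg_distrib, Finset.sum_mul, Complex.exp_sum,
    ← Finset.prod_mul_distrib]
  refine Finset.prod_congr rfl fun e _ => ?_
  rw [mul_pow, AddChar.map_nsmul_eq_pow, ← Complex.exp_nat_mul]
  ring_nf

theorem norm_exp_neg_mul_log_lt_one {z : ℂ} (hz : 0 < z.re) {q : ℝ} (hq : 1 < q) :
    ‖Complex.exp (-z * Real.log q)‖ < 1 := by
  rw [Complex.norm_exp, Real.exp_lt_one_iff]
  simpa using mul_pos hz (Real.log_pos hq)

/-- for a complete regular fan `Σ`, a piecewise linear `φ` with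
`Re φ(e) > 0` on all primitive generators, `q > 1`, and a unitary character `χ` of the
lattice, the sum `∑_{n ∈ N} q^{-φ(n)} χ(n)` converges absolutely with value
`∑_{σ ∈ Σ} ∏_{e ∈ σ ∩ Σ₁} χ(e) q^{-φ(e)} / (1 - χ(e) q^{-φ(e)})`. -/
theorem stmt7 {d : ℕ} (F : Finset (Finset (Fin d → ℤ)))
    (hF : IsCompleteRegularFanGens F)
    (φ : (Fin d → ℝ) → ℂ) (hφ : IsPL F φ)
    (hpos : ∀ s ∈ F, ∀ e ∈ s, 0 < (φ (fun j => (e j : ℝ))).re)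
    (q : ℝ) (hq : 1 < q)
    (χ : AddChar (Fin d → ℤ) ℂ) (hχ : ∀ n, ‖χ n‖ = 1) :
    Summable (fun n : Fin d → ℤ =>
      ‖Complex.exp (-(φ (fun j => (n j : ℝ))) * Real.log q) * χ n‖) ∧
    HasSum (fun n : Fin d → ℤ =>
        Complex.exp (-(φ (fun j => (n j : ℝ))) * Real.log q) * χ n)
      (∑ s ∈ F, ∏ e ∈ s,
        (χ e * Complex.exp (-(φ (fun j => (e j : ℝ))) * Real.log q)) /
          (1 - χ e * Complex.exp (-(φ (fun j => (e j : ℝ))) * Real.log q))) := by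
  obtain ⟨hnorm, hsum⟩ := hF.hasSum_sum_prod_div_one_sub
    (f := fun n => Complex.exp (-(φ (castVec n)) * Real.log q) * χ n)
    (fun s hs k => (hφ s hs).elim fun l hl => exp_mul_addChar_sum_nsmul hl _ χ k)
    (fun s hs e he => by
      rw [norm_mul, hχ, mul_one]
      exact norm_exp_neg_mul_log_lt_one (hpos s hs e he) hq)
  refine ⟨hnorm, ?_⟩
  simp only [mul_comm (χ _)]
  exact hsum
end

section
/- Let Σ be a complete regular fan in a d-dimensional real vector space N_ℝ with one-dimensional generators Σ₁, let φ : N_ℝ → ℂ be Σ-piecewise linear with Re(φ(e)) > 0 for all e ∈ Σ₁, and let m ∈ M_ℝ = N_ℝ∨. Then ∫_{N_ℝ} e^{−φ(n) − i n(m)} dn = ∑_{σ ∈ Σ, dim σ = d} ∏_{e ∈ σ ∩ Σ₁} 1/(φ(e) + i e(m)), where dn is the Lebesgue measure normalized by the lattice N. -/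
/-!
On a `d`-dimensional cone `σ` with generators `e₁, …, e_d`, a `ℤ`-basis of `N`, the exponent
`ψ(n) = φ(n) + i n(m)` is linear, and the unimodular substitution `n = ∑ yᵢ eᵢ` maps the orthant
`y ≥ 0` onto `σ` with Jacobian `1`. The integral over `σ` thus factors as
`∏ᵢ ∫₀^∞ exp(-ψ(eᵢ) t) dt = ∏ᵢ ψ(eᵢ)⁻¹`, which converges because `Re ψ(eᵢ) = Re φ(eᵢ) > 0`.
The `d`-dimensional cones cover `N_ℝ` up to the lower-dimensional cones, which lie in proper
subspaces, and two distinct cones meet only in their boundaries, which are null because cones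
are convex. So the integral over `N_ℝ` is the sum of the integrals over the `d`-dimensional cones.
-/

open MeasureTheory Set

theorem integrableOn_and_integral_Ici_exp_neg_mul {a : ℂ} (ha : 0 < a.re) :
    IntegrableOn (fun t : ℝ => Complex.exp (-(a * t))) (Ici 0) ∧
      ∫ t in Ici (0 : ℝ), Complex.exp (-(a * t)) = a⁻¹ := by
  have ha' : (-a).re < 0 := by simpa using ha
  simp_rw [← neg_mul]
  constructor
  · rw [integrableOn_Ici_iff_integrableOn_Ioi]
    exact integrableOn_exp_mul_complex_Ioi ha' 0
  · rw [integral_Ici_eq_integral_Ioi, integral_exp_mul_complex_Ioi ha' 0]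
    simp

theorem integrableOn_and_integral_Ici_prod_exp_neg_mul {ι : Type*} [Fintype ι] {a : ι → ℂ}
    (ha : ∀ i, 0 < (a i).re) :
    IntegrableOn (fun y : ι → ℝ => ∏ i, Complex.exp (-(a i * y i))) (Ici 0) ∧
      ∫ y in Ici (0 : ι → ℝ), ∏ i, Complex.exp (-(a i * y i)) = ∏ i, (a i)⁻¹ := by
  rw [← pi_univ_Ici, IntegrableOn, volume_pi, Measure.restrict_pi_pi]
  refine ⟨Integrable.fintype_prod fun i => (integrableOn_and_integral_Ici_exp_neg_mul (ha i)).1, ?_⟩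
  rw [integral_fintype_prod_eq_prod (fun i (t : ℝ) => Complex.exp (-(a i * t)))]
  exact Finset.prod_congr rfl fun i _ => (integrableOn_and_integral_Ici_exp_neg_mul (ha i)).2

theorem integrableOn_image_iff_and_integral_image_of_abs_det_eq_one {E F : Type*}
    [NormedAddCommGroup E] [NormedSpace ℝ E] [FiniteDimensional ℝ E] [MeasurableSpace E]
    [BorelSpace E] [NormedAddCommGroup F] [NormedSpace ℝ F] (μ : Measure E) [μ.IsAddHaarMeasure]
    (T : E →L[ℝ] E) (hT : |T.det| = 1) {s : Set E} (hs : MeasurableSet s) (g : E → F) :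
    (IntegrableOn g (T '' s) μ ↔ IntegrableOn (g ∘ T) s μ) ∧
      ∫ x in T '' s, g x ∂μ = ∫ y in s, g (T y) ∂μ := by
  have hinj : Function.Injective T := by
    have hunit : IsUnit T.det := isUnit_iff_ne_zero.2 fun h => by simp [h] at hT
    exact ((Module.End.isUnit_iff _).1 ((LinearMap.isUnit_iff_isUnit_det _).2 hunit)).injective
  have hT' : ∀ x ∈ s, HasFDerivWithinAt T T s x := fun x _ => T.hasFDerivWithinAt
  constructor
  · rw [integrableOn_image_iff_integrableOn_abs_det_fderiv_smul μ hs hT' hinj.injOn, hT]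
    simp [Function.comp_def]
  · rw [integral_image_eq_integral_abs_det_fderiv_smul μ hs hT' hinj.injOn, hT]
    simp

theorem integrable_and_integral_eq_sum_of_ae_cover {X E ι : Type*} [MeasurableSpace X]
    [NormedAddCommGroup E] [NormedSpace ℝ E] {μ : Measure X} {f : X → E} (t : Finset ι)
    {C : ι → Set X} (hC : ∀ i ∈ t, NullMeasurableSet (C i) μ)
    (hd : (t : Set ι).Pairwise fun i j => AEDisjoint μ (C i) (C j))
    (hcover : ∀ᵐ x ∂μ, ∃ i ∈ t, x ∈ C i) (hf : ∀ i ∈ t, IntegrableOn f (C i) μ) :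
    Integrable f μ ∧ ∫ x, f x ∂μ = ∑ i ∈ t, ∫ x in C i, f x ∂μ := by
  have hU : (⋃ i : t, C i : Set X) =ᵐ[μ] (univ : Set X) := by
    refine ae_eq_univ.2 (measure_eq_zero_iff_ae_notMem.2 ?_)
    filter_upwards [hcover] with x ⟨i, hi, hx⟩
    simpa using ⟨i, hi, hx⟩
  have hint : IntegrableOn f (⋃ i : t, C i) μ :=
    integrableOn_finite_iUnion.2 fun i => hf i i.2
  refine ⟨integrableOn_univ.1 (hint.congr_set_ae hU.symm), ?_⟩
  rw [← setIntegral_univ, ← setIntegral_congr_set hU,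
    integral_iUnion_ae (s := fun i : t => C i) (fun i => hC i i.2)
      (fun i j hij => hd i.2 j.2 (Subtype.coe_ne_coe.2 hij)) hint,
    tsum_fintype, Finset.sum_coe_sort t fun i => ∫ x in C i, f x ∂μ]

section Cone

variable {d : ℕ}

theorem convex_coneOf (s : Finset (Fin d → ℤ)) : Convex ℝ (coneOf s) := by
  rintro _ ⟨c, hc, rfl⟩ _ ⟨c', hc', rfl⟩ α β hα hβ -
  refine ⟨fun e => α * c e + β * c' e, fun e =>
    add_nonneg (mul_nonneg hα (hc e)) (mul_nonneg hβ (hc' e)), ?_⟩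
  simp only [Finset.smul_sum, smul_smul, add_smul, Finset.sum_add_distrib]

theorem volume_coneOf_sdiff_interior (s : Finset (Fin d → ℤ)) :
    volume (coneOf s \ interior (coneOf s)) = 0 :=
  measure_mono_null (sdiff_subset_sdiff_left subset_closure)
    ((convex_coneOf s).addHaar_frontier volume)

theorem mem_coneOf_of_mem {s : Finset (Fin d → ℤ)} {e : Fin d → ℤ} (he : e ∈ s) :
    (fun j => (e j : ℝ)) ∈ coneOf s := by
  classical
  refine ⟨fun e' => if e' = e then 1 else 0, fun e' => by positivity, ?_⟩
  simp [ite_smul, he]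

theorem coneOf_subset_span (s : Finset (Fin d → ℤ)) :
    coneOf s ⊆ Submodule.span ℝ (s.image fun e j => (e j : ℝ) : Set (Fin d → ℝ)) := by
  rintro _ ⟨c, -, rfl⟩
  exact Submodule.sum_mem _ fun e he => Submodule.smul_mem _ _
    (Submodule.subset_span (by exact_mod_cast Finset.mem_image_of_mem _ he))

theorem volume_span_of_card_lt {s : Finset (Fin d → ℤ)} (hs : s.card < d) :
    volume (Submodule.span ℝ (s.image fun e j => (e j : ℝ) : Set (Fin d → ℝ)) :
      Set (Fin d → ℝ)) = 0 := by
  refine Measure.addHaar_submodule _ _ fun htop => hs.not_ge ?_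
  calc d = Module.finrank ℝ
        (Submodule.span ℝ (s.image fun e j => (e j : ℝ) : Set (Fin d → ℝ))) := by
        rw [htop, finrank_top, Module.finrank_fin_fun]
    _ ≤ (s.image fun e j => (e j : ℝ)).card := finrank_span_finset_le_card _
    _ ≤ s.card := Finset.card_image_le

theorem coneOf_image_eq_image_Ici {ι : Type*} [Fintype ι] {v : ι → Fin d → ℤ}
    (hv : Function.Injective v) :
    coneOf (Finset.univ.image v) =
      (fun y : ι → ℝ => ∑ i, y i • fun j => (v i j : ℝ)) '' Ici 0 := by
  classical
  have hsum : ∀ c : (Fin d → ℤ) → ℝ, ∑ e ∈ Finset.univ.image v, c e • (fun j => (e j : ℝ)) =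
      ∑ i, c (v i) • fun j => (v i j : ℝ) := fun c =>
    Finset.sum_image fun i _ i' _ h => hv h
  ext x
  constructor
  · rintro ⟨c, hc, rfl⟩
    exact ⟨c ∘ v, fun i => hc (v i), (hsum c).symm⟩
  · rintro ⟨y, hy, rfl⟩
    refine ⟨Function.extend v y 0, fun e => ?_, ?_⟩
    · by_cases he : ∃ i, v i = e
      · obtain ⟨i, rfl⟩ := he
        simpa [hv.extend_apply] using hy i
      · simp [Function.extend_apply' _ _ _ he]
    · simp [hsum, hv.extend_apply]

end Cone

section IntegerBasis

variable {d : ℕ} (b : Module.Basis (Fin d) ℤ (Fin d → ℤ))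

-- Defined through the integer matrix of `b`, so that its determinant is the image of a unit of `ℤ`.
noncomputable def realLinearCombination : (Fin d → ℝ) →L[ℝ] (Fin d → ℝ) :=
  LinearMap.toContinuousLinearMap
    (Matrix.toLin' (((Pi.basisFun ℤ (Fin d)).toMatrix b).map (Int.cast : ℤ → ℝ)))

theorem realLinearCombination_apply (y : Fin d → ℝ) :
    realLinearCombination b y = ∑ i, y i • fun j => (b i j : ℝ) := by
  ext j
  simp [realLinearCombination, Matrix.mulVec, dotProduct, Module.Basis.toMatrix_apply, mul_comm]

theorem abs_det_realLinearCombination : |(realLinearCombination b).det| = 1 := by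
  have hunit := Int.isUnit_iff.1 ((Pi.basisFun ℤ (Fin d)).isUnit_det b)
  rw [Module.Basis.det_apply] at hunit
  rw [realLinearCombination, ContinuousLinearMap.det, LinearMap.coe_toContinuousLinearMap,
    LinearMap.det_toLin', ← Int.cast_det]
  rcases hunit with h | h <;> simp [h]

theorem integrableOn_and_integral_coneOf_basis_exp_neg (L : (Fin d → ℝ) →ₗ[ℝ] ℂ)
    (hL : ∀ i, 0 < (L fun j => (b i j : ℝ)).re) :
    IntegrableOn (fun x => Complex.exp (-L x)) (coneOf (Finset.univ.image b)) ∧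
      ∫ x in coneOf (Finset.univ.image b), Complex.exp (-L x) =
        ∏ i, (L fun j => (b i j : ℝ))⁻¹ := by
  have hcone : coneOf (Finset.univ.image b) = realLinearCombination b '' Ici 0 := by
    rw [coneOf_image_eq_image_Ici b.injective]
    simp_rw [realLinearCombination_apply]
  have hexp : ∀ y, Complex.exp (-L (realLinearCombination b y)) =
      ∏ i, Complex.exp (-((L fun j => (b i j : ℝ)) * y i)) := by
    intro y
    simp [realLinearCombination_apply, ← Finset.sum_neg_distrib, Complex.exp_sum, mul_comm]
  obtain ⟨hI, hE⟩ := integrableOn_image_iff_and_integral_image_of_abs_det_eq_one volume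
    (realLinearCombination b) (abs_det_realLinearCombination b) measurableSet_Ici
    fun x => Complex.exp (-L x)
  rw [hcone, hI, hE]
  simp_rw [Function.comp_def, hexp]
  exact integrableOn_and_integral_Ici_prod_exp_neg_mul hL

end IntegerBasis

section Fan

variable {d : ℕ} {F : Finset (Finset (Fin d → ℤ))}

theorem IsPL.add_linearMap {φ : (Fin d → ℝ) → ℂ} (hφ : IsPL F φ) (g : (Fin d → ℝ) →ₗ[ℝ] ℂ) :
    IsPL F fun x => φ x + g x := by
  intro s hs
  obtain ⟨l, hl⟩ := hφ s hs
  exact ⟨l + g, fun x hx => by simp [hl x hx]⟩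

namespace IsCompleteRegularFanGens

theorem exists_basis_subset_image (hF : IsCompleteRegularFanGens F)
    {s : Finset (Fin d → ℤ)} (hs : s ∈ F) :
    ∃ b : Module.Basis (Fin d) ℤ (Fin d → ℤ), s ⊆ Finset.univ.image b := by
  obtain ⟨b, hb⟩ := hF.regular s hs
  exact ⟨b, fun e he => by
    obtain ⟨i, rfl⟩ := hb he
    exact Finset.mem_image_of_mem b (Finset.mem_univ i)⟩

theorem card_le (hF : IsCompleteRegularFanGens F) {s : Finset (Fin d → ℤ)} (hs : s ∈ F) :
    s.card ≤ d := by
  obtain ⟨b, hb⟩ := hF.exists_basis_subset_image hs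
  simpa using (Finset.card_le_card hb).trans Finset.card_image_le

theorem exists_basis_eq_image (hF : IsCompleteRegularFanGens F)
    {s : Finset (Fin d → ℤ)} (hs : s ∈ F) (hcard : s.card = d) :
    ∃ b : Module.Basis (Fin d) ℤ (Fin d → ℤ), s = Finset.univ.image b := by
  obtain ⟨b, hb⟩ := hF.exists_basis_subset_image hs
  exact ⟨b, Finset.eq_of_subset_of_card_le hb (Finset.card_image_le.trans_eq (by simp [hcard]))⟩

theorem ae_exists_mem_coneOf (hF : IsCompleteRegularFanGens F) :
    ∀ᵐ x, ∃ s ∈ F, s.card = d ∧ x ∈ coneOf s := by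
  have hspan : ∀ᵐ x, ∀ s ∈ F, s.card < d →
      x ∉ (Submodule.span ℝ (s.image fun e j => (e j : ℝ) : Set (Fin d → ℝ)) :
        Set (Fin d → ℝ)) := by
    refine (Filter.eventually_all_finset F).2 fun s _ => ?_
    by_cases hcard : s.card < d
    · exact (measure_eq_zero_iff_ae_notMem.1 (volume_span_of_card_lt hcard)).mono
        fun x hx _ => hx
    · exact ae_of_all _ fun x h => absurd h hcard
  filter_upwards [hspan] with x hx
  obtain ⟨s, ⟨hs, hxs⟩, -⟩ := hF.partition x
  have hxs := intrinsicInterior_subset hxs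
  exact ⟨s, hs, (hF.card_le hs).eq_or_lt.resolve_right fun hlt =>
    hx s hs hlt (coneOf_subset_span s hxs), hxs⟩

theorem aedisjoint_coneOf (hF : IsCompleteRegularFanGens F)
    {s t : Finset (Fin d → ℤ)} (hs : s ∈ F) (ht : t ∈ F) (hst : s ≠ t) :
    AEDisjoint volume (coneOf s) (coneOf t) := by
  refine measure_mono_null ?_ (measure_union_null (volume_coneOf_sdiff_interior s)
    (volume_coneOf_sdiff_interior t))
  rintro x ⟨hxs, hxt⟩
  by_contra h
  simp only [mem_union, mem_sdiff, hxs, hxt, true_and, not_or, not_not] at h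
  obtain ⟨u, -, hu⟩ := hF.partition x
  exact hst ((hu s ⟨hs, interior_subset_intrinsicInterior h.1⟩).trans
    (hu t ⟨ht, interior_subset_intrinsicInterior h.2⟩).symm)

theorem integrableOn_and_integral_coneOf_exp_neg (hF : IsCompleteRegularFanGens F)
    {ψ : (Fin d → ℝ) → ℂ} (hψ : IsPL F ψ)
    (hpos : ∀ s ∈ F, ∀ e ∈ s, 0 < (ψ fun j => (e j : ℝ)).re)
    {s : Finset (Fin d → ℤ)} (hs : s ∈ F) (hcard : s.card = d) :
    IntegrableOn (fun x => Complex.exp (-ψ x)) (coneOf s) ∧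
      ∫ x in coneOf s, Complex.exp (-ψ x) = ∏ e ∈ s, (ψ fun j => (e j : ℝ))⁻¹ := by
  obtain ⟨b, rfl⟩ := hF.exists_basis_eq_image hs hcard
  obtain ⟨L, hL⟩ := hψ _ hs
  have hb : ∀ i, ψ (fun j => (b i j : ℝ)) = L fun j => (b i j : ℝ) := fun i =>
    hL _ (mem_coneOf_of_mem (Finset.mem_image_of_mem b (Finset.mem_univ i)))
  have hmeas := (convex_coneOf (Finset.univ.image b)).nullMeasurableSet volume
  obtain ⟨hint, hval⟩ := integrableOn_and_integral_coneOf_basis_exp_neg b L fun i =>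
    hb i ▸ hpos _ hs _ (Finset.mem_image_of_mem b (Finset.mem_univ i))
  refine ⟨hint.congr_fun_ae ?_, ?_⟩
  · exact (ae_restrict_mem₀ hmeas).mono fun x hx => by simp only [hL x hx]
  · rw [setIntegral_congr_fun₀ hmeas fun x hx => by rw [hL x hx], hval,
      Finset.prod_image fun i _ i' _ h => b.injective h]
    simp_rw [hb]

theorem integrable_and_integral_exp_neg (hF : IsCompleteRegularFanGens F)
    {ψ : (Fin d → ℝ) → ℂ} (hψ : IsPL F ψ)
    (hpos : ∀ s ∈ F, ∀ e ∈ s, 0 < (ψ fun j => (e j : ℝ)).re) :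
    Integrable (fun x => Complex.exp (-ψ x)) ∧
      ∫ x, Complex.exp (-ψ x) =
        ∑ s ∈ F.filter (fun s => s.card = d), ∏ e ∈ s, (ψ fun j => (e j : ℝ))⁻¹ := by
  have hcone := fun s (hs : s ∈ F.filter fun s => s.card = d) =>
    hF.integrableOn_and_integral_coneOf_exp_neg hψ hpos (Finset.mem_filter.1 hs).1
      (Finset.mem_filter.1 hs).2
  obtain ⟨hint, hsum⟩ := integrable_and_integral_eq_sum_of_ae_cover (F.filter _)
    (fun s _ => (convex_coneOf s).nullMeasurableSet volume)
    (fun s hs t ht hst => hF.aedisjoint_coneOf (Finset.mem_filter.1 hs).1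
      (Finset.mem_filter.1 ht).1 hst)
    (hF.ae_exists_mem_coneOf.mono fun x ⟨s, hs, hcard, hx⟩ =>
      ⟨s, Finset.mem_filter.2 ⟨hs, hcard⟩, hx⟩)
    fun s hs => (hcone s hs).1
  exact ⟨hint, hsum.trans (Finset.sum_congr rfl fun s hs => (hcone s hs).2)⟩

end IsCompleteRegularFanGens

end Fan

/-- with `Σ` a complete regular fan, `φ` piecewise linear with
`Re φ(e) > 0` on all generators, and `m ∈ M_ℝ`, the integral
`∫_{N_ℝ} e^{-φ(n) - i n(m)} dn` (Lebesgue measure normalized by the lattice `N`)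
converges absolutely and equals the sum over the `d`-dimensional cones `σ` of
`∏_{e ∈ σ ∩ Σ₁} 1 / (φ(e) + i e(m))`. -/
theorem stmt8 {d : ℕ} (F : Finset (Finset (Fin d → ℤ)))
    (hF : IsCompleteRegularFanGens F)
    (φ : (Fin d → ℝ) → ℂ) (hφ : IsPL F φ)
    (hpos : ∀ s ∈ F, ∀ e ∈ s, 0 < (φ (fun j => (e j : ℝ))).re)
    (m : Fin d → ℝ) :
    Integrable (fun n : Fin d → ℝ =>
      Complex.exp (-(φ n) - Complex.I * (∑ j, n j * m j : ℝ))) ∧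
    (∫ n : Fin d → ℝ, Complex.exp (-(φ n) - Complex.I * (∑ j, n j * m j : ℝ))) =
      ∑ s ∈ F.filter (fun s => s.card = d), ∏ e ∈ s,
        (φ (fun j => (e j : ℝ)) + Complex.I * (∑ j, (e j : ℝ) * m j : ℝ))⁻¹ := by
  let pairing : (Fin d → ℝ) →ₗ[ℝ] ℂ :=
    Complex.I • Complex.ofRealCLM.toLinearMap ∘ₗ (dotProductBilin ℝ ℝ).flip m
  have hpairing : ∀ x, pairing x = Complex.I * (∑ j, x j * m j : ℝ) := fun x => by
    simp [pairing, dotProduct]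
  have h := hF.integrable_and_integral_exp_neg (hφ.add_linearMap pairing) fun s hs e he => by
    simpa [hpairing] using hpos s hs e he
  simpa only [hpairing, neg_add'] using h
end

section
/- Let Σ be a complete regular fan in N_ℝ with one-dimensional generators Σ₁, and define for each cone σ ∈ Σ the rational function R_σ((u_e)_{e∈Σ₁}) = ∏_{e ∈ σ ∩ Σ₁} u_e/(1 − u_e), R_Σ = ∑_{σ ∈ Σ} R_σ, and Q_Σ((u_e)) = R_Σ((u_e)) ∏_{e ∈ Σ₁}(1 − u_e). Then Q_Σ is a polynomial in the variables u_e with Q_Σ(0) = 1, and Q_Σ − 1 is a sum of monomials each of total degree at least two. -/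
/-!
Clearing denominators, the term of `σ` becomes `∏_{e ∈ σ} u_e · ∏_{e ∈ Σ₁ \ σ} (1 - u_e)`, so
`Q_Σ` is a polynomial. Only `σ = {0}` contributes to the constant term. A linear monomial `u_e`
gets `-1` from the cone `{0}` and `+1` from the ray through `e`, which lies in `Σ` because fans
are closed under taking faces; all other cones contribute only in degree at least two.
-/

namespace MvPolynomial

variable {R : Type*} [CommRing R] {ι : Type*}

lemma coeff_zero_prod_one_sub_X (t : Finset ι) :
    coeff 0 (∏ f ∈ t, (1 - X f : MvPolynomial ι R)) = 1 := by
  change constantCoeff _ = 1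
  simp

variable [DecidableEq ι]

lemma coeff_prod_X_mul_eq_zero {s : Finset ι} {m : ι →₀ ℕ} {f : ι} (hf : f ∈ s) (hmf : m f = 0)
    (p : MvPolynomial ι R) : coeff m ((∏ g ∈ s, X g) * p) = 0 := by
  rw [← Finset.insert_erase hf, Finset.prod_insert (Finset.notMem_erase f s), mul_assoc,
    coeff_X_mul', if_neg (by simpa using hmf)]

lemma coeff_single_prod_one_sub_X (e : ι) (t : Finset ι) :
    coeff (Finsupp.single e 1) (∏ f ∈ t, (1 - X f : MvPolynomial ι R)) =
      if e ∈ t then -1 else 0 := by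
  induction t using Finset.induction_on with
  | empty => simp [coeff_one, eq_comm, Finsupp.single_eq_zero]
  | @insert a t ha ih =>
    rw [Finset.prod_insert ha, sub_mul, one_mul, coeff_sub, ih, coeff_X_mul']
    by_cases hae : a = e
    · subst hae
      simp [ha, coeff_zero_prod_one_sub_X]
    · simp [hae, Ne.symm hae]

lemma coeff_single_prod_X_mul_prod_one_sub_X (e : ι) (s t : Finset ι) :
    coeff (Finsupp.single e 1) ((∏ f ∈ s, X f) * ∏ f ∈ t \ s, (1 - X f : MvPolynomial ι R)) =
      (if s = ∅ then if e ∈ t then -1 else 0 else 0) + if s = {e} then 1 else 0 := by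
  by_cases hs : s = ∅
  · subst hs
    simp [coeff_single_prod_one_sub_X, Finset.singleton_ne_empty e |>.symm]
  by_cases hse : s = {e}
  · subst hse
    simp [coeff_X_mul', coeff_zero_prod_one_sub_X]
  obtain ⟨f, hf, hfe⟩ : ∃ f ∈ s, f ∉ ({e} : Finset ι) :=
    Finset.not_subset.mp fun h => (Finset.subset_singleton_iff.mp h).elim hs hse
  rw [coeff_prod_X_mul_eq_zero hf (by simpa [Finsupp.single_apply, eq_comm] using hfe),
    if_neg hs, if_neg hse, add_zero]

end MvPolynomial

open MvPolynomial

section FanNumerator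

variable {ι : Type*} [DecidableEq ι]

/-- `Q_Σ` for the family `F` of cones, each cone given by its set of ray generators. -/
noncomputable def fanNumerator (R : Type*) [CommRing R] (F : Finset (Finset ι)) :
    MvPolynomial ι R :=
  ∑ s ∈ F, (∏ f ∈ s, X f) * ∏ f ∈ F.sup id \ s, (1 - X f)

variable {R : Type*} [CommRing R]

lemma eval_fanNumerator {K : Type*} [Field K] (F : Finset (Finset ι)) (u : ι → K)
    (hu : ∀ e ∈ F.sup id, u e ≠ 1) :
    eval u (fanNumerator K F) =
      (∑ s ∈ F, ∏ e ∈ s, u e / (1 - u e)) * ∏ e ∈ F.sup id, (1 - u e) := by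
  rw [fanNumerator, map_sum, Finset.sum_mul]
  refine Finset.sum_congr rfl fun s hs => ?_
  have hsub : s ⊆ F.sup id := Finset.le_sup (f := id) hs
  rw [← Finset.prod_sdiff hsub, mul_comm (∏ e ∈ _ \ s, _), ← mul_assoc, ← Finset.prod_mul_distrib]
  simp only [map_mul, map_prod, map_sub, map_one, eval_X]
  congr 1
  refine Finset.prod_congr rfl fun f hf => ?_
  rw [div_mul_cancel₀ _ (sub_ne_zero.mpr (hu f (hsub hf)).symm)]

lemma coeff_zero_fanNumerator {F : Finset (Finset ι)} (hF : ∅ ∈ F) :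
    coeff 0 (fanNumerator R F) = 1 := by
  rw [fanNumerator, coeff_sum, Finset.sum_eq_single_of_mem ∅ hF]
  · simp [coeff_zero_prod_one_sub_X]
  · intro s _ hs
    obtain ⟨f, hf⟩ := Finset.nonempty_iff_ne_empty.mpr hs
    exact coeff_prod_X_mul_eq_zero hf rfl _

lemma coeff_single_fanNumerator {F : Finset (Finset ι)} (hF : ∀ s ∈ F, ∀ t ⊆ s, t ∈ F) (e : ι) :
    coeff (Finsupp.single e 1) (fanNumerator R F) = 0 := by
  simp only [fanNumerator, coeff_sum, coeff_single_prod_X_mul_prod_one_sub_X,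
    Finset.sum_add_distrib, Finset.sum_ite_eq']
  by_cases he : e ∈ F.sup id
  · obtain ⟨s, hs, hes⟩ := Finset.mem_sup.mp he
    have hempty : ∅ ∈ F := hF s hs ∅ (Finset.empty_subset s)
    have hray : {e} ∈ F := hF s hs {e} (Finset.singleton_subset_iff.mpr hes)
    simp [he, hempty, hray]
  · have hray : {e} ∉ F := fun h => he (Finset.mem_sup.mpr ⟨{e}, h, Finset.mem_singleton_self e⟩)
    simp [he, hray]

end FanNumerator

/-- for a complete regular fan `Σ` with generators `Σ₁ = F.sup id`, the
rational function `Q_Σ((u_e)) = (∑_{σ ∈ Σ} ∏_{e ∈ σ ∩ Σ₁} u_e/(1-u_e)) ∏_{e ∈ Σ₁} (1-u_e)`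
is a polynomial in the `u_e` with constant term `1`, and `Q_Σ - 1` is a sum of monomials of
total degree at least two. -/
theorem stmt10 {d : ℕ} (F : Finset (Finset (Fin d → ℤ)))
    (hF : IsCompleteRegularFanGens F) :
    ∃ Q : MvPolynomial (Fin d → ℤ) ℂ,
      (∀ u : (Fin d → ℤ) → ℂ, (∀ e ∈ F.sup id, u e ≠ 1) →
        MvPolynomial.eval u Q =
          (∑ s ∈ F, ∏ e ∈ s, u e / (1 - u e)) * ∏ e ∈ F.sup id, (1 - u e)) ∧
      MvPolynomial.coeff 0 Q = 1 ∧
      (∀ mono : (Fin d → ℤ) →₀ ℕ, MvPolynomial.coeff mono Q ≠ 0 →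
        mono = 0 ∨ 2 ≤ mono.sum fun _ k => k) := by
  -- completeness makes `F` nonempty; closed under faces, it then contains the cone `{0}`
  obtain ⟨s, ⟨hs, -⟩, -⟩ := hF.partition 0
  refine ⟨fanNumerator ℂ F, eval_fanNumerator F,
    coeff_zero_fanNumerator (hF.downward s hs ∅ (Finset.empty_subset s)), fun mono hmono => ?_⟩
  change mono = 0 ∨ 2 ≤ mono.degree
  rcases Nat.lt_or_ge mono.degree 2 with hlt | hge
  · interval_cases h : mono.degree
    · exact .inl ((Finsupp.degree_eq_zero_iff mono).mp h)
    · obtain ⟨e, rfl⟩ := (Finsupp.sum_eq_one_iff mono).mp h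
      exact absurd (coeff_single_fanNumerator hF.downward e) hmono
  · exact .inr hge
end

section
/- Let V be a finite-dimensional real vector space, c : V → ℝ_{≥0} a sufficient function, v₀ ∈ V nonzero, and V₁ ⊂ V a hyperplane with v₀ ∉ V₁. Then the function c₀ : V₁ → ℝ_{≥0} defined by c₀(v₁) = ∫_{−∞}^{∞} c(v₁ + τ v₀) dτ is a sufficient function on V₁. -/
open MeasureTheory Filter

/-- A nonnegative function `c` on a finite-dimensional real vector space is *sufficient* if
for every linear subspace `U` (with any Haar measure) the translates `u ↦ c(v+u)` are
integrable over `U`, and for every `v ∉ U` the integrals `c_U(τv) = ∫_U c(τv+u) du` tend to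
`0` as `τ → ±∞`. -/
def Sufficient (V : Type*) [NormedAddCommGroup V] [NormedSpace ℝ V]
    [MeasurableSpace V] (c : V → ℝ) : Prop :=
  ∀ (U : Submodule ℝ V) (μ : Measure U), Measure.IsAddHaarMeasure μ →
    (∀ v : V, Integrable (fun u : U => c (v + (u : V))) μ) ∧
    (∀ v : V, v ∉ U →
      Tendsto (fun τ : ℝ => ∫ u : U, c (τ • v + (u : V)) ∂μ) atTop (nhds 0) ∧
      Tendsto (fun τ : ℝ => ∫ u : U, c (τ • v + (u : V)) ∂μ) atBot (nhds 0))

section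

variable {V : Type*} [NormedAddCommGroup V] [NormedSpace ℝ V]

theorem Submodule.eq_zero_of_add_smul_mem {p : Submodule ℝ V} {x v₀ : V} {τ : ℝ}
    (hv₀ : v₀ ∉ p) (hx : x ∈ p) (h : x + τ • v₀ ∈ p) : τ = 0 := by
  by_contra hτ
  exact hv₀ ((p.smul_mem_iff hτ).mp (by simpa using p.sub_mem h hx))

variable {E : Type*} [AddCommGroup E] [Module ℝ E]

theorem LinearMap.injective_coprod_toSpanSingleton {p : Submodule ℝ V} {f : E →ₗ[ℝ] V}
    (hf : Function.Injective f) (hfp : LinearMap.range f ≤ p) {v₀ : V} (hv₀ : v₀ ∉ p) :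
    Function.Injective (f.coprod (LinearMap.toSpanSingleton ℝ V v₀)) := by
  rw [← LinearMap.ker_eq_bot, LinearMap.ker_eq_bot']
  rintro ⟨e, τ⟩ h
  have hfe : f e ∈ p := hfp ⟨e, rfl⟩
  obtain rfl : τ = 0 := p.eq_zero_of_add_smul_mem hv₀ hfe (by simp_all)
  simp_all [map_eq_zero_iff f hf]

theorem LinearMap.notMem_range_coprod_toSpanSingleton {p : Submodule ℝ V} {f : E →ₗ[ℝ] V}
    (hfp : LinearMap.range f ≤ p) {v₀ : V} (hv₀ : v₀ ∉ p) {v : V} (hv : v ∈ p)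
    (hvf : v ∉ LinearMap.range f) :
    v ∉ LinearMap.range (f.coprod (LinearMap.toSpanSingleton ℝ V v₀)) := by
  rintro ⟨⟨e, τ⟩, rfl⟩
  have hfe : f e ∈ p := hfp ⟨e, rfl⟩
  obtain rfl : τ = 0 := p.eq_zero_of_add_smul_mem hv₀ hfe (by simpa using hv)
  exact hvf ⟨e, by simp⟩

variable [MeasurableSpace V] [BorelSpace V]

theorem LinearMap.exists_isAddHaarMeasure_range {F : Type*} [NormedAddCommGroup F]
    [NormedSpace ℝ F] [FiniteDimensional ℝ F] [MeasurableSpace F] [BorelSpace F]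
    (μ : Measure F) [μ.IsAddHaarMeasure] {L : F →ₗ[ℝ] V} (hL : Function.Injective L) :
    ∃ ν : Measure (LinearMap.range L), ν.IsAddHaarMeasure ∧ ∀ g : V → ℝ,
      (Integrable (fun x : LinearMap.range L => g x) ν ↔ Integrable (fun y => g (L y)) μ) ∧
      ∫ x : LinearMap.range L, g x ∂ν = ∫ y, g (L y) ∂μ := by
  let e := (LinearEquiv.ofInjective L hL).toContinuousLinearEquiv
  refine ⟨μ.map e.toHomeomorph.toMeasurableEquiv, e.isAddHaarMeasure_map μ, fun g => ?_⟩
  exact ⟨integrable_map_equiv _ (fun x : LinearMap.range L => g x),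
    integral_map_equiv _ (fun x : LinearMap.range L => g x)⟩

end

theorem stmt11_general {V : Type*} [NormedAddCommGroup V] [NormedSpace ℝ V]
    [FiniteDimensional ℝ V] [MeasurableSpace V] [BorelSpace V]
    (c : V → ℝ) (hc0 : ∀ v, 0 ≤ c v) (hc : Sufficient V c)
    (v₀ : V)
    (V₁ : Submodule ℝ V)
    (hv₀₁ : v₀ ∉ V₁) :
    (∀ v₁ : V₁, 0 ≤ ∫ τ : ℝ, c ((v₁ : V) + τ • v₀)) ∧
    Sufficient V₁ (fun v₁ : V₁ => ∫ τ : ℝ, c ((v₁ : V) + τ • v₀)) := by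
  refine ⟨fun v₁ => integral_nonneg fun τ => hc0 _, fun U μ hμ => ?_⟩
  set f := V₁.subtype ∘ₗ U.subtype
  have hfV₁ : LinearMap.range f ≤ V₁ := by rintro _ ⟨u, rfl⟩; exact (u : V₁).2
  have hL := LinearMap.injective_coprod_toSpanSingleton
    (V₁.injective_subtype.comp U.injective_subtype : Function.Injective f) hfV₁ hv₀₁
  obtain ⟨ν, hν, hνL⟩ := LinearMap.exists_isAddHaarMeasure_range (μ.prod volume) hL
  obtain ⟨hWint, hWtend⟩ := hc _ ν hν
  have hprod (w : V) :
      Integrable (fun p : U × ℝ => c (w + (f p.1 + p.2 • v₀))) (μ.prod volume) := by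
    simpa using (hνL fun x => c (w + x)).1.mp (hWint w)
  have hfiber (v : V₁) (u : U) (τ : ℝ) :
      ((v + u : V₁) : V) + τ • v₀ = (v : V) + (f u + τ • v₀) := by
    simp [f, add_assoc]
  refine ⟨fun v => by simpa only [hfiber] using (hprod v).integral_prod_left, fun v hv => ?_⟩
  have hvL := LinearMap.notMem_range_coprod_toSpanSingleton hfV₁ hv₀₁ v.2
    (by rintro ⟨u, hu⟩; exact hv (Subtype.ext hu ▸ u.2))
  have hc₀_eq (τ : ℝ) : ∫ u : U, ∫ σ : ℝ, c (((τ • v + u : V₁) : V) + σ • v₀) ∂volume ∂μ =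
      ∫ x : LinearMap.range _, c (τ • (v : V) + x) ∂ν := by
    obtain ⟨hint_iff, hintegral⟩ := hνL fun x => c (τ • (v : V) + x)
    rw [hintegral, integral_prod _ (hint_iff.mp (hWint _))]
    simp [f, add_assoc]
  simp only [hc₀_eq]
  exact hWtend _ hvL

/-- if `c` is a sufficient function on `V`, `v₀ ≠ 0`, and `V₁` is a hyperplane
with `v₀ ∉ V₁`, then `c₀(v₁) = ∫_ℝ c(v₁ + τ v₀) dτ` is a (nonnegative) sufficient function
on `V₁`. -/
theorem stmt11 {V : Type*} [NormedAddCommGroup V] [NormedSpace ℝ V]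
    [FiniteDimensional ℝ V] [MeasurableSpace V] [BorelSpace V]
    (c : V → ℝ) (hc0 : ∀ v, 0 ≤ c v) (hc : Sufficient V c)
    (v₀ : V) (hv₀ : v₀ ≠ 0)
    (V₁ : Submodule ℝ V) (hV₁ : Module.finrank ℝ V₁ + 1 = Module.finrank ℝ V)
    (hv₀₁ : v₀ ∉ V₁) :
    (∀ v₁ : V₁, 0 ≤ ∫ τ : ℝ, c ((v₁ : V) + τ • v₀)) ∧
    Sufficient V₁ (fun v₁ : V₁ => ∫ τ : ℝ, c ((v₁ : V) + τ • v₀)) :=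
  stmt11_general c hc0 hc v₀ V₁ hv₀₁
end

section
/- Let E be a finite-dimensional real vector space, V ⊂ E a subspace, l₁,…,l_m ∈ E∨ linearly independent linear forms, and B ⊂ E an open convex neighborhood of 0 with l_j(x) > −1 for all x ∈ B and all j. Let f be a meromorphic function on the tube domain T_B = B + iE that is distinguished with respect to (V; l₁,…,l_m), and let C be a connected component of B ∖ ∪_j Ker(l_j). Then the integral f̃_C(z) = (2π)^{−dim V} ∫_V f(z+iv) dv converges absolutely and locally uniformly on the tube T_C = C + iE, and f̃_C is holomorphic on T_C. -/
/-!
Off the hyperplanes `Ker lⱼ` the factors `(lⱼ + 1) / lⱼ` are holomorphic, and since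
`Re lⱼ(z + iv) = lⱼ(Re z)` they are bounded on `K + iV` for every compact `K` in the tube `T_C`.
Hence `f(z + iv)` is dominated by `κ(K) c(v)` locally uniformly in `z`, where `c` is integrable
(sufficiency applied to the subspace `U = V`). Cauchy estimates turn this into a domination of
the derivative of `z ↦ f(z + iv)`, and differentiation under the integral sign gives holomorphy.
-/

open MeasureTheory Filter

open Metric Set

theorem Sufficient.integrable {V : Type*} [NormedAddCommGroup V] [NormedSpace ℝ V]
    [MeasurableSpace V] [BorelSpace V] [FiniteDimensional ℝ V] {c : V → ℝ}
    (hc : Sufficient V c) (μ : Measure V) [μ.IsAddHaarMeasure] : Integrable c μ := by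
  let e : V ≃L[ℝ] (⊤ : Submodule ℝ V) := Submodule.topEquiv.symm.toContinuousLinearEquiv
  have h := (hc ⊤ (μ.map e) inferInstance).1 0
  rw [show μ.map e = μ.map e.toHomeomorph.toMeasurableEquiv from rfl,
    integrable_map_equiv] at h
  simpa [Function.comp_def, e] using h

-- Schwarz lemma: `f` maps `ball x r` into `closedBall (f x) (2 * M)`.
theorem norm_fderiv_le_of_forall_mem_ball_norm_le {E F : Type*} [NormedAddCommGroup E]
    [NormedSpace ℂ E] [NormedAddCommGroup F] [NormedSpace ℂ F] {f : E → F} {x : E} {r M : ℝ}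
    (hr : 0 < r) (hf : DifferentiableOn ℂ f (ball x r)) (hM : ∀ y ∈ ball x r, ‖f y‖ ≤ M) :
    ‖fderiv ℂ f x‖ ≤ 2 * M / r := by
  refine Complex.norm_fderiv_le_div_of_mapsTo_ball hf (fun y hy => ?_) hr
  rw [mem_closedBall_iff_norm]
  linarith [norm_sub_le (f y) (f x), hM y hy, hM x (mem_ball_self hr)]

section ParametricIntegral

variable {α E : Type*} [TopologicalSpace α] [NormedAddCommGroup E] {f : E → ℂ} {φ : α → E}

theorem continuous_comp_const_add (hφ : Continuous φ) {z : E}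
    (hf : ∀ v, ContinuousAt f (z + φ v)) : Continuous fun v => f (z + φ v) :=
  continuous_iff_continuousAt.2 fun v =>
    ContinuousAt.comp (f := fun v => z + φ v) (hf v) (by fun_prop)

variable [MeasurableSpace α] [OpensMeasurableSpace α] {μ : Measure α} {c : α → ℝ}

theorem integrable_comp_const_add_of_norm_le (hφ : Continuous φ) {z : E}
    (hf : ∀ v, ContinuousAt f (z + φ v)) (hc : Integrable c μ) {κ : ℝ}
    (hbound : ∀ v, ‖f (z + φ v)‖ ≤ κ * c v) : Integrable (fun v => f (z + φ v)) μ :=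
  (hc.const_mul κ).mono' (continuous_comp_const_add hφ hf).aestronglyMeasurable
    (ae_of_all _ hbound)

variable [NormedSpace ℂ E] [FiniteDimensional ℂ E] [MeasurableSpace E] [BorelSpace E]
  {U : Set E}

theorem differentiableOn_integral_comp_add_of_locally_dominated (hφ : Continuous φ)
    (hU : IsOpen U) (hf : ∀ z ∈ U, ∀ v, DifferentiableAt ℂ f (z + φ v)) (hc : Integrable c μ)
    (hbound : ∀ K ⊆ U, IsCompact K → ∃ κ, ∀ z ∈ K, ∀ v, ‖f (z + φ v)‖ ≤ κ * c v) :
    DifferentiableOn ℂ (fun z => ∫ v, f (z + φ v) ∂μ) U := by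
  intro z₀ hz₀
  obtain ⟨ε, hε, hεU⟩ := nhds_basis_closedBall.mem_iff.1 (hU.mem_nhds hz₀)
  obtain ⟨κ, hκ⟩ := hbound _ hεU (isCompact_closedBall _ _)
  set r := ε / 2
  have hr : 0 < r := by positivity
  have hball : ∀ x ∈ ball z₀ r, ball x r ⊆ closedBall z₀ ε := fun x hx =>
    ball_subset_closedBall.trans (closedBall_subset_closedBall' (by
      rw [mem_ball] at hx; linarith [show r = ε / 2 from rfl]))
  have hderiv : ∀ v, ∀ x ∈ ball z₀ r,
      HasFDerivAt (fun y => f (y + φ v)) (fderiv ℂ f (x + φ v)) x := fun v x hx =>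
    (hasFDerivAt_comp_add_right (φ v)).2 (hf x (hεU (hball x hx (mem_ball_self hr))) v).hasFDerivAt
  have hderiv_le : ∀ v, ∀ x ∈ ball z₀ r, ‖fderiv ℂ f (x + φ v)‖ ≤ 2 * (κ * c v) / r := by
    intro v x hx
    rw [← fderiv_comp_add_right]
    exact norm_fderiv_le_of_forall_mem_ball_norm_le hr (fun y hy =>
      ((differentiableAt_comp_add_right (φ v)).2
        (hf y (hεU (hball x hx hy)) v)).differentiableWithinAt)
      fun y hy => hκ y (hball x hx hy) v
  have hcont : ∀ x ∈ U, ∀ v, ContinuousAt f (x + φ v) := fun x hx v => (hf x hx v).continuousAt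
  refine (hasFDerivAt_integral_of_dominated_of_fderiv_le (μ := μ)
    (F := fun x v => f (x + φ v)) (F' := fun x v => fderiv ℂ f (x + φ v))
    (ball_mem_nhds z₀ hr)
    (eventually_of_mem (hU.mem_nhds hz₀) fun x hx =>
      (continuous_comp_const_add hφ (hcont x hx)).aestronglyMeasurable)
    (integrable_comp_const_add_of_norm_le hφ (hcont z₀ hz₀) hc
      (hκ z₀ (mem_closedBall_self hε.le)))
    ((measurable_fderiv ℂ f).comp (continuous_const.add hφ).measurable).aestronglyMeasurable
    (ae_of_all _ hderiv_le) ((hc.const_mul κ).const_mul 2 |>.div_const r)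
    (ae_of_all _ hderiv)).differentiableAt.differentiableWithinAt

end ParametricIntegral

section Tube

variable {ι : Type*}

def tube (C : Set (ι → ℝ)) : Set (ι → ℂ) := {z | (fun i => (z i).re) ∈ C}

def imagEmbed (y : ι → ℝ) : ι → ℂ := fun i => y i * Complex.I

theorem continuous_imagEmbed : Continuous (imagEmbed : (ι → ℝ) → ι → ℂ) := by
  unfold imagEmbed; fun_prop

theorem re_add_imagEmbed_apply (z : ι → ℂ) (y : ι → ℝ) (i : ι) :
    ((z + imagEmbed y) i).re = (z i).re := by
  simp [imagEmbed]

theorem add_imagEmbed_mem_tube {C : Set (ι → ℝ)} {z : ι → ℂ} (hz : z ∈ tube C) (y : ι → ℝ) :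
    z + imagEmbed y ∈ tube C := by
  simpa [tube, imagEmbed] using hz

theorem isOpen_tube [Finite ι] {C : Set (ι → ℝ)} (hC : IsOpen C) : IsOpen (tube C) :=
  hC.preimage (by fun_prop)

end Tube

section LinearForms

variable {ι κ : Type*} [Fintype ι] [Fintype κ]

theorem re_sum_ofReal_mul (a : ι → ℝ) (z : ι → ℂ) :
    (∑ i, (a i : ℂ) * z i).re = ∑ i, a i * (z i).re := by
  simp [Complex.re_sum]

theorem norm_add_one_div_le {w : ℂ} (hw : w.re ≠ 0) : ‖(w + 1) / w‖ ≤ 1 + |w.re|⁻¹ := by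
  have hw0 : w ≠ 0 := fun h => hw (by simp [h])
  rw [add_div, div_self hw0, one_div]
  refine (norm_add_le _ _).trans ?_
  rw [norm_one, norm_inv]
  exact add_le_add_right (inv_anti₀ (abs_pos.2 hw) (Complex.abs_re_le_norm w)) 1

theorem differentiableAt_prod_add_one_div (a : κ → ι → ℝ) {z : ι → ℂ}
    (hz : ∀ j, ∑ i, a j i * (z i).re ≠ 0) :
    DifferentiableAt ℂ (fun z : ι → ℂ =>
      ∏ j, ((∑ i, (a j i : ℂ) * z i) + 1) / (∑ i, (a j i : ℂ) * z i)) z := by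
  classical
  have hfactor (j : κ) : DifferentiableAt ℂ (fun z : ι → ℂ =>
      ((∑ i, (a j i : ℂ) * z i) + 1) / (∑ i, (a j i : ℂ) * z i)) z := by
    have hne : ∑ i, (a j i : ℂ) * z i ≠ 0 := fun h =>
      hz j (by rw [← re_sum_ofReal_mul, h, Complex.zero_re])
    fun_prop (disch := exact hne)
  exact (HasFDerivAt.finsetProd fun j _ => (hfactor j).hasFDerivAt).differentiableAt

theorem norm_prod_add_one_div_le (a : κ → ι → ℝ) {z : ι → ℂ}
    (hz : ∀ j, ∑ i, a j i * (z i).re ≠ 0) :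
    ‖∏ j, ((∑ i, (a j i : ℂ) * z i) + 1) / (∑ i, (a j i : ℂ) * z i)‖ ≤
      ∏ j, (1 + |∑ i, a j i * (z i).re|⁻¹) := by
  rw [norm_prod]
  refine Finset.prod_le_prod (fun _ _ => norm_nonneg _) fun j _ => ?_
  rw [← re_sum_ofReal_mul]
  exact norm_add_one_div_le (by rw [re_sum_ofReal_mul]; exact hz j)

theorem IsCompact.exists_norm_prod_add_one_div_add_imagEmbed_le (a : κ → ι → ℝ)
    {K : Set (ι → ℂ)} (hK : IsCompact K) (hKa : ∀ z ∈ K, ∀ j, ∑ i, a j i * (z i).re ≠ 0) :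
    ∃ M, ∀ z ∈ K, ∀ y : ι → ℝ, ‖∏ j, ((∑ i, (a j i : ℂ) * (z + imagEmbed y) i) + 1) /
      (∑ i, (a j i : ℂ) * (z + imagEmbed y) i)‖ ≤ M := by
  obtain ⟨M, hM⟩ := hK.exists_bound_of_continuousOn (f := fun z : ι → ℂ =>
    ∏ j, (1 + |∑ i, a j i * (z i).re|⁻¹)) <| continuousOn_finsetProd _ fun j _ =>
      continuousOn_const.add <| ContinuousOn.inv₀ (by fun_prop) fun z hz =>
        abs_ne_zero.2 (hKa z hz j)
  refine ⟨M, fun z hz y => ?_⟩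
  have h := norm_prod_add_one_div_le a (z := z + imagEmbed y)
    (by simp only [re_add_imagEmbed_apply]; exact hKa z hz)
  simp only [re_add_imagEmbed_apply] at h
  exact h.trans ((le_abs_self _).trans (hM z hz))

end LinearForms

theorem stmt12_general {n m : ℕ} (a : Fin m → Fin n → ℝ)
    (V : Submodule ℝ (Fin n → ℝ))
    (B : Set (Fin n → ℝ)) (hBopen : IsOpen B)
    (g : (Fin n → ℂ) → ℂ)
    (hg : DifferentiableOn ℂ g {z : Fin n → ℂ | (fun i => (z i).re) ∈ B})
    (c : V → ℝ) (hsuff : Sufficient V c)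
    (hbound : ∀ K ⊆ {z : Fin n → ℂ | (fun i => (z i).re) ∈ B}, IsCompact K →
      ∃ κ : ℝ, ∀ z ∈ K, ∀ v : V,
        ‖g (fun i => z i + ((v : Fin n → ℝ) i) * Complex.I)‖ ≤ κ * c v)
    (f : (Fin n → ℂ) → ℂ)
    (hf : ∀ z : Fin n → ℂ,
      f z = g z * ∏ j, ((∑ i, (a j i : ℂ) * z i) + 1) / (∑ i, (a j i : ℂ) * z i))
    (x₀ : Fin n → ℝ)
    (C : Set (Fin n → ℝ))
    (hC : C = connectedComponentIn (B \ ⋃ j, {x : Fin n → ℝ | ∑ i, a j i * x i = 0}) x₀)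
    (μ : Measure V) [Measure.IsAddHaarMeasure μ] :
    (∀ z ∈ {z : Fin n → ℂ | (fun i => (z i).re) ∈ C},
      Integrable (fun v : V => f (fun i => z i + ((v : Fin n → ℝ) i) * Complex.I)) μ) ∧
    DifferentiableOn ℂ
      (fun z : Fin n → ℂ => ((2 * Real.pi : ℂ) ^ (Module.finrank ℝ V))⁻¹ *
        ∫ v : V, f (fun i => z i + ((v : Fin n → ℝ) i) * Complex.I) ∂μ)
      {z : Fin n → ℂ | (fun i => (z i).re) ∈ C} := by
  set φ : V → Fin n → ℂ := fun v => imagEmbed (v : Fin n → ℝ)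
  have hφ : Continuous φ := continuous_imagEmbed.comp continuous_subtype_val
  have hCopen : IsOpen C := hC ▸ (hBopen.sdiff (isClosed_iUnion_of_finite fun j =>
    isClosed_eq (by fun_prop) continuous_const)).connectedComponentIn
  have hCsub : C ⊆ B \ ⋃ j, {x : Fin n → ℝ | ∑ i, a j i * x i = 0} :=
    hC ▸ connectedComponentIn_subset _ _
  have hTC : ∀ z ∈ tube C, z ∈ tube B ∧ ∀ j, ∑ i, a j i * (z i).re ≠ 0 := fun z hz =>
    ⟨(hCsub hz).1, fun j h => (hCsub hz).2 (mem_iUnion.2 ⟨j, h⟩)⟩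
  have hdiff : ∀ z ∈ tube C, ∀ v, DifferentiableAt ℂ f (z + φ v) := fun z hz v => by
    obtain ⟨hzB, hza⟩ := hTC _ (add_imagEmbed_mem_tube hz _)
    rw [show f = _ from funext hf]
    exact (hg.differentiableAt ((isOpen_tube hBopen).mem_nhds hzB)).mul
      (differentiableAt_prod_add_one_div a hza)
  have hdom : ∀ K ⊆ tube C, IsCompact K → ∃ κ, ∀ z ∈ K, ∀ v, ‖f (z + φ v)‖ ≤ κ * c v := by
    intro K hK hKc
    obtain ⟨κ, hκ⟩ := hbound K (fun z hz => (hTC z (hK hz)).1) hKc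
    obtain ⟨M, hM⟩ :=
      hKc.exists_norm_prod_add_one_div_add_imagEmbed_le a fun z hz => (hTC z (hK hz)).2
    refine ⟨κ * M, fun z hz v => ?_⟩
    rw [hf, norm_mul, mul_right_comm]
    exact mul_le_mul (hκ z hz v) (hM z hz v) (norm_nonneg _)
      ((norm_nonneg _).trans (hκ z hz v))
  have hcμ := hsuff.integrable μ
  refine ⟨fun z hz => ?_,
    (differentiableOn_integral_comp_add_of_locally_dominated hφ (isOpen_tube hCopen) hdiff hcμ
      hdom).const_mul _⟩
  obtain ⟨κ, hκ⟩ := hdom {z} (singleton_subset_iff.2 hz) isCompact_singleton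
  exact integrable_comp_const_add_of_norm_le hφ (fun v => (hdiff z hz v).continuousAt) hcμ
    (hκ z rfl)

/-- Let `E = ℝⁿ`, `V ⊆ E` a subspace, `l₁,…,l_m` linearly independent linear
forms (with coefficient vectors `a j`), `B` an open convex neighborhood of `0` with
`l_j > -1` on `B`, and `f` a meromorphic function on the tube `T_B` distinguished with
respect to `(V; l₁,…,l_m)`;  i.e. `g(z) = f(z) ∏_j l_j(z)/(l_j(z)+1)` is holomorphic on
`T_B` and `‖g(z+iv)‖ ≤ κ(K) c(v)` on compacts `K ⊆ T_B` for a sufficient function `c`.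
If `C` is the connected component of `B ∖ ⋃_j Ker l_j` of a point `x₀`, then for every
`z` in the tube `T_C` the integral `∫_V f(z+iv) dv` converges absolutely, and
`f̃_C(z) = (2π)^{-dim V} ∫_V f(z+iv) dv` is holomorphic on `T_C`. -/
theorem stmt12 {n m : ℕ} (a : Fin m → Fin n → ℝ) (ha : LinearIndependent ℝ a)
    (V : Submodule ℝ (Fin n → ℝ))
    (B : Set (Fin n → ℝ)) (hBopen : IsOpen B) (hBconv : Convex ℝ B)
    (hB0 : (0 : Fin n → ℝ) ∈ B)
    (hBl : ∀ x ∈ B, ∀ j, -1 < ∑ i, a j i * x i)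
    (g : (Fin n → ℂ) → ℂ)
    (hg : DifferentiableOn ℂ g {z : Fin n → ℂ | (fun i => (z i).re) ∈ B})
    (c : V → ℝ) (hc0 : ∀ v, 0 ≤ c v) (hsuff : Sufficient V c)
    (hbound : ∀ K ⊆ {z : Fin n → ℂ | (fun i => (z i).re) ∈ B}, IsCompact K →
      ∃ κ : ℝ, ∀ z ∈ K, ∀ v : V,
        ‖g (fun i => z i + ((v : Fin n → ℝ) i) * Complex.I)‖ ≤ κ * c v)
    (f : (Fin n → ℂ) → ℂ)
    (hf : ∀ z : Fin n → ℂ,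
      f z = g z * ∏ j, ((∑ i, (a j i : ℂ) * z i) + 1) / (∑ i, (a j i : ℂ) * z i))
    (x₀ : Fin n → ℝ) (hx₀ : x₀ ∈ B \ ⋃ j, {x : Fin n → ℝ | ∑ i, a j i * x i = 0})
    (C : Set (Fin n → ℝ))
    (hC : C = connectedComponentIn (B \ ⋃ j, {x : Fin n → ℝ | ∑ i, a j i * x i = 0}) x₀)
    (μ : Measure V) [Measure.IsAddHaarMeasure μ] :
    (∀ z ∈ {z : Fin n → ℂ | (fun i => (z i).re) ∈ C},
      Integrable (fun v : V => f (fun i => z i + ((v : Fin n → ℝ) i) * Complex.I)) μ) ∧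
    DifferentiableOn ℂ
      (fun z : Fin n → ℂ => ((2 * Real.pi : ℂ) ^ (Module.finrank ℝ V))⁻¹ *
        ∫ v : V, f (fun i => z i + ((v : Fin n → ℝ) i) * Complex.I) ∂μ)
      {z : Fin n → ℂ | (fun i => (z i).re) ∈ C} :=
  stmt12_general a V B hBopen g hg c hsuff hbound f hf x₀ C hC μ
end

section
/- Let Σ be a complete fan of rational polyhedral cones in N_ℝ and let N″_ℝ ⊂ N_ℝ be a rational linear subspace. Then Σ″ := { σ ∩ N″_ℝ : σ ∈ Σ } is a complete fan of rational polyhedral cones in N″_ℝ: each σ ∩ N″_ℝ is a rational polyhedral cone, the collection is closed under intersections which are common faces, and the union of all these cones is N″_ℝ. -/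
/-- A rational polyhedral cone in `ℝ^d`: the set of nonnegative combinations of finitely
many integral vectors. -/
def IsRatPolyCone {d : ℕ} (σ : Set (Fin d → ℝ)) : Prop :=
  ∃ (k : ℕ) (g : Fin k → (Fin d → ℤ)),
    σ = {x | ∃ c : Fin k → ℝ, (∀ i, 0 ≤ c i) ∧ x = ∑ i, c i • (fun j => (g i j : ℝ))}

/-- `τ` is a face of the cone `σ`. -/
def IsFaceOfCone {d : ℕ} (τ σ : Set (Fin d → ℝ)) : Prop :=
  ∃ l : (Fin d → ℝ) →ₗ[ℝ] ℝ, (∀ x ∈ σ, 0 ≤ l x) ∧ τ = {x ∈ σ | l x = 0}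

/-- A complete fan of rational polyhedral cones. -/
structure IsCompleteFan {d : ℕ} (F : Finset (Set (Fin d → ℝ))) : Prop where
  rat : ∀ σ ∈ F, IsRatPolyCone σ
  strong : ∀ σ ∈ F, σ ∩ (-σ) ⊆ {0}
  face_mem : ∀ σ ∈ F, ∀ τ : Set (Fin d → ℝ), IsFaceOfCone τ σ → τ ∈ F
  inter_face : ∀ σ ∈ F, ∀ τ ∈ F, IsFaceOfCone (σ ∩ τ) σ ∧ IsFaceOfCone (σ ∩ τ) τ
  covers : ⋃ σ ∈ F, σ = Set.univ

/-!
Write `W = span ℝ {wᵢ}`. As a cone, `W` is generated by the integral vectors `±wᵢ`, so `σ ∩ W` is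
an intersection of two cones `C, D` generated by integral vectors. Such an intersection is the
image under the first projection of `(C ×ˢ D) ∩ {(x, y) | x - y = 0}`, and `x - y = 0` is a
finite system of integral linear equations. Each equation `l = 0` is the pair of half-spaces
`l ≥ 0`, `-l ≥ 0`, and Fourier–Motzkin elimination cuts a cone generated by a finite set `s` of
lattice vectors with a half-space `l ≥ 0`: the result is generated by the `v ∈ s` with
`l v ≥ 0` together with the vectors `l u • v - l v • u` for `l u ≥ 0 > l v`, which are again
lattice vectors when `l` is integral on the lattice. The face and covering conditions pass
directly from `Σ` to the intersections with `W`.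
-/

open PointedCone

section ConeHull

variable {E : Type*} [AddCommGroup E] [Module ℝ E]

theorem mem_hull_finset_iff {s : Finset E} {x : E} :
    x ∈ hull ℝ (s : Set E) ↔ ∃ c : E → ℝ, (∀ v, 0 ≤ c v) ∧ ∑ v ∈ s, c v • v = x := by
  constructor
  · intro hx
    obtain ⟨c, -, rfl⟩ := Submodule.mem_span_finset.1 hx
    exact ⟨fun v => c v, fun v => (c v).2, rfl⟩
  · rintro ⟨c, hc, rfl⟩
    exact Submodule.sum_mem _ fun v hv => smul_mem _ (hc v) (subset_hull hv)

theorem coe_hull_range {κ : Type*} [Fintype κ] (g : κ → E) :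
    (hull ℝ (Set.range g) : Set E) = {x | ∃ c : κ → ℝ, (∀ i, 0 ≤ c i) ∧ x = ∑ i, c i • g i} := by
  ext x
  rw [SetLike.mem_coe, Submodule.mem_span_range_iff_exists_fun]
  constructor
  · rintro ⟨c, rfl⟩
    exact ⟨fun i => c i, fun i => (c i).2, rfl⟩
  · rintro ⟨c, hc, rfl⟩
    exact ⟨fun i => ⟨c i, hc i⟩, rfl⟩

open Pointwise in
theorem coe_hull_union_neg (s : Set E) :
    (hull ℝ (s ∪ -s) : Set E) = Submodule.span ℝ s := by
  refine subset_antisymm ?_ fun x hx => ?_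
  · have : hull ℝ (s ∪ -s) ≤ (Submodule.span ℝ s : PointedCone ℝ E) :=
      Submodule.span_le.2 <| Set.union_subset Submodule.subset_span fun v hv => by
        simpa using neg_mem (Submodule.subset_span (R := ℝ) (Set.mem_neg.1 hv))
    exact this
  · refine (Submodule.span_le.2 (fun v hv => ?_) hx : x ∈ (hull ℝ (s ∪ -s)).lineal).1
    exact ⟨subset_hull (Or.inl hv), subset_hull (Or.inr (by simpa using hv))⟩

end ConeHull

section FourierMotzkin

variable {E : Type*} [AddCommGroup E] [Module ℝ E]

theorem sum_smul_sub_sum_smul (l : E →ₗ[ℝ] ℝ) (A B : Finset E) (c : E → ℝ) :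
    l (∑ u ∈ A, c u • u) • ∑ v ∈ B, c v • v - l (∑ v ∈ B, c v • v) • ∑ u ∈ A, c u • u =
      ∑ u ∈ A, ∑ v ∈ B, (c u * c v) • (l u • v - l v • u) := by
  simp only [map_sum, map_smul, smul_eq_mul, Finset.smul_sum, smul_sub, Finset.sum_sub_distrib,
    smul_smul, Finset.sum_mul, Finset.sum_smul]
  rw [Finset.sum_comm (s := B)]
  congr 1 <;> refine Finset.sum_congr rfl fun _ _ => Finset.sum_congr rfl fun _ _ => ?_ <;>
    congr 1 <;> ring

variable [DecidableEq E]

noncomputable def fourierMotzkin (l : E →ₗ[ℝ] ℝ) (s : Finset E) : Finset E :=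
  {v ∈ s | 0 ≤ l v} ∪
    ({u ∈ s | 0 ≤ l u} ×ˢ {v ∈ s | l v < 0}).image fun p => l p.1 • p.2 - l p.2 • p.1

theorem fourierMotzkin_subset (l : E →ₗ[ℝ] ℝ) (s : Finset E) :
    (fourierMotzkin l s : Set E) ⊆ (hull ℝ (s : Set E) : Set E) ∩ {x | 0 ≤ l x} := by
  intro w hw
  simp only [fourierMotzkin, Finset.coe_union, Finset.coe_filter, Finset.coe_image,
    Finset.coe_product, Set.mem_union, Set.mem_image, Set.mem_prod, Set.mem_ofPred_eq,
    Prod.exists] at hw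
  rcases hw with ⟨hw, hlw⟩ | ⟨u, v, ⟨⟨hu, hlu⟩, hv, hlv⟩, rfl⟩
  · exact ⟨subset_hull hw, hlw⟩
  · refine ⟨?_, by simp [mul_comm]⟩
    rw [sub_eq_add_neg, ← neg_smul]
    exact add_mem (smul_mem _ hlu (subset_hull hv)) (smul_mem _ (by linarith) (subset_hull hu))

theorem hull_inter_halfspace_subset_hull_fourierMotzkin (l : E →ₗ[ℝ] ℝ) (s : Finset E) :
    (hull ℝ (s : Set E) : Set E) ∩ {x | 0 ≤ l x} ⊆ hull ℝ (fourierMotzkin l s : Set E) := by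
  rintro x ⟨hx, hlx⟩
  obtain ⟨c, hc, rfl⟩ := mem_hull_finset_iff.1 hx
  set P := {v ∈ s | 0 ≤ l v}
  set N := {v ∈ s | l v < 0}
  set a := ∑ v ∈ P, c v • v
  set n := ∑ v ∈ N, c v • v
  have hsplit : ∑ v ∈ s, c v • v = a + n := by
    simp only [a, n, P, N, ← not_le]
    exact (Finset.sum_filter_add_sum_filter_not _ _ _).symm
  have hlN : ∀ v ∈ N, l v < 0 := fun v hv => (Finset.mem_filter.1 hv).2
  have hla : 0 ≤ l a := by
    simp only [a, map_sum, map_smul, smul_eq_mul]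
    exact Finset.sum_nonneg fun v hv => mul_nonneg (hc v) (Finset.mem_filter.1 hv).2
  have hln : l n ≤ 0 := by
    simp only [n, map_sum, map_smul, smul_eq_mul]
    exact Finset.sum_nonpos fun v hv => mul_nonpos_of_nonneg_of_nonpos (hc v) (hlN v hv).le
  have ha : a ∈ hull ℝ (fourierMotzkin l s : Set E) :=
    Submodule.span_mono (by simp [fourierMotzkin, P]) (mem_hull_finset_iff.2 ⟨c, hc, rfl⟩)
  have hD : l a • n - l n • a ∈ hull ℝ (fourierMotzkin l s : Set E) := by
    rw [sum_smul_sub_sum_smul]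
    refine Submodule.sum_mem _ fun u hu => Submodule.sum_mem _ fun v hv => ?_
    refine smul_mem _ (mul_nonneg (hc u) (hc v)) (subset_hull ?_)
    simp only [fourierMotzkin, Finset.coe_union, Finset.coe_image, Set.mem_union]
    exact Or.inr ⟨(u, v), Finset.mem_product.2 ⟨hu, hv⟩, rfl⟩
  rw [hsplit] at hlx ⊢
  replace hlx : 0 ≤ l a + l n := by simpa using hlx
  rcases hla.eq_or_lt with hla0 | hla0
  · have hn : n = 0 := by
      have hterm : ∀ v ∈ N, c v * l v = 0 := by
        refine (Finset.sum_eq_zero_iff_of_nonpos fun v hv =>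
          mul_nonpos_of_nonneg_of_nonpos (hc v) (hlN v hv).le).1 ?_
        simpa [n] using le_antisymm hln (by linarith)
      refine Finset.sum_eq_zero fun v hv => ?_
      rw [(mul_eq_zero.1 (hterm v hv)).resolve_right (hlN v hv).ne, zero_smul]
    rw [hn, add_zero]
    exact ha
  · have hx : a + n = ((l a + l n) / l a) • a + (l a)⁻¹ • (l a • n - l n • a) := by
      match_scalars <;> field_simp
      ring
    rw [hx]
    exact add_mem (smul_mem _ (div_nonneg hlx hla0.le) ha) (smul_mem _ (inv_nonneg.2 hla0.le) hD)

theorem coe_hull_fourierMotzkin (l : E →ₗ[ℝ] ℝ) (s : Finset E) :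
    (hull ℝ (fourierMotzkin l s : Set E) : Set E) =
      (hull ℝ (s : Set E) : Set E) ∩ {x | 0 ≤ l x} := by
  refine (hull_inter_halfspace_subset_hull_fourierMotzkin l s).antisymm' ?_
  have : hull ℝ (fourierMotzkin l s : Set E) ≤ hull ℝ (s : Set E) ⊓ (positive ℝ ℝ).comap l :=
    Submodule.span_le.2 (fourierMotzkin_subset l s)
  exact this

theorem fourierMotzkin_subset_lattice {Λ : AddSubgroup E} {l : E →ₗ[ℝ] ℝ} {s : Finset E}
    (hs : (s : Set E) ⊆ Λ) (hl : ∀ v ∈ Λ, l v ∈ (Int.castAddHom ℝ).range) :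
    (fourierMotzkin l s : Set E) ⊆ Λ := by
  intro w hw
  simp only [fourierMotzkin, Finset.coe_union, Finset.coe_filter, Finset.coe_image,
    Finset.coe_product, Set.mem_union, Set.mem_image, Set.mem_prod, Set.mem_ofPred_eq,
    Prod.exists] at hw
  rcases hw with ⟨hw, -⟩ | ⟨u, v, ⟨⟨hu, -⟩, hv, -⟩, rfl⟩
  · exact hs hw
  · obtain ⟨m, hm⟩ := hl u (hs hu)
    obtain ⟨n, hn⟩ := hl v (hs hv)
    rw [← hm, ← hn, Int.coe_castAddHom, Int.cast_smul_eq_zsmul, Int.cast_smul_eq_zsmul]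
    exact sub_mem (zsmul_mem (hs hv) m) (zsmul_mem (hs hu) n)

end FourierMotzkin

section LatticeCones

variable {E : Type*} [AddCommGroup E] [Module ℝ E]

def IsLatticeFG (Λ : AddSubgroup E) (C : Set E) : Prop :=
  ∃ s : Finset E, (s : Set E) ⊆ Λ ∧ (hull ℝ (s : Set E) : Set E) = C

variable {Λ : AddSubgroup E} {C : Set E} {l : E →ₗ[ℝ] ℝ}

theorem IsLatticeFG.inter_halfspace (hC : IsLatticeFG Λ C)
    (hl : ∀ v ∈ Λ, l v ∈ (Int.castAddHom ℝ).range) : IsLatticeFG Λ (C ∩ {x | 0 ≤ l x}) := by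
  classical
  obtain ⟨s, hs, rfl⟩ := hC
  exact ⟨fourierMotzkin l s, fourierMotzkin_subset_lattice hs hl, coe_hull_fourierMotzkin l s⟩

theorem IsLatticeFG.inter_ker (hC : IsLatticeFG Λ C)
    (hl : ∀ v ∈ Λ, l v ∈ (Int.castAddHom ℝ).range) : IsLatticeFG Λ (C ∩ {x | l x = 0}) := by
  have hl' : ∀ v ∈ Λ, (-l) v ∈ (Int.castAddHom ℝ).range := fun v hv => by
    simpa using neg_mem (hl v hv)
  convert (hC.inter_halfspace hl).inter_halfspace hl' using 1
  ext x
  simp only [Set.mem_inter_iff, Set.mem_ofPred_eq, LinearMap.neg_apply, neg_nonneg, and_assoc,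
    le_antisymm_iff, and_comm (a := l x ≤ 0)]

theorem IsLatticeFG.image {F : Type*} [AddCommGroup F] [Module ℝ F] {Λ' : AddSubgroup F}
    (hC : IsLatticeFG Λ C) (φ : E →ₗ[ℝ] F) (hφ : ∀ v ∈ Λ, φ v ∈ Λ') :
    IsLatticeFG Λ' (φ '' C) := by
  classical
  obtain ⟨s, hs, rfl⟩ := hC
  refine ⟨s.image φ, ?_, ?_⟩
  · rw [Finset.coe_image, Set.image_subset_iff]
    exact fun v hv => hφ v (hs hv)
  · rw [Finset.coe_image, ← coe_map, map, Submodule.map_span]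
    rfl

theorem IsLatticeFG.prod {F : Type*} [AddCommGroup F] [Module ℝ F] {Λ' : AddSubgroup F}
    {D : Set F} (hC : IsLatticeFG Λ C) (hD : IsLatticeFG Λ' D) :
    IsLatticeFG (Λ.prod Λ') (C ×ˢ D) := by
  classical
  obtain ⟨s, hs, rfl⟩ := hC
  obtain ⟨t, ht, rfl⟩ := hD
  refine ⟨s.image (LinearMap.inl ℝ E F) ∪ t.image (LinearMap.inr ℝ E F), ?_, ?_⟩
  · rw [Finset.coe_union, Finset.coe_image, Finset.coe_image, Set.union_subset_iff,
      Set.image_subset_iff, Set.image_subset_iff]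
    exact ⟨fun v hv => ⟨hs hv, zero_mem _⟩, fun v hv => ⟨zero_mem _, ht hv⟩⟩
  · rw [Finset.coe_union, Finset.coe_image, Finset.coe_image, ← Submodule.prod_coe,
      ← LinearMap.span_inl_union_inr]
    rfl

open Pointwise in
theorem isLatticeFG_span_range {κ : Type*} [Fintype κ] (g : κ → E) (hg : ∀ i, g i ∈ Λ) :
    IsLatticeFG Λ (Submodule.span ℝ (Set.range g)) := by
  classical
  have hrange : ((Finset.univ.image g : Finset E) : Set E) = Set.range g := by simp
  refine ⟨Finset.univ.image g ∪ -Finset.univ.image g, ?_, ?_⟩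
  · rw [Finset.coe_union, Finset.coe_neg, hrange]
    have hgΛ : Set.range g ⊆ Λ := Set.range_subset_iff.2 hg
    exact Set.union_subset hgΛ fun v hv => by simpa using neg_mem (hgΛ (Set.mem_neg.1 hv))
  · rw [Finset.coe_union, Finset.coe_neg, hrange, coe_hull_union_neg]

def intLattice (ι : Type*) : AddSubgroup (ι → ℝ) :=
  AddSubgroup.pi Set.univ fun _ => (Int.castAddHom ℝ).range

theorem IsLatticeFG.inter_ker_pi {ι : Type*} [Fintype ι] (hC : IsLatticeFG Λ C)
    (φ : E →ₗ[ℝ] ι → ℝ) (hφ : ∀ v ∈ Λ, φ v ∈ intLattice ι) :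
    IsLatticeFG Λ (C ∩ {x | φ x = 0}) := by
  classical
  have key (J : Finset ι) : IsLatticeFG Λ (C ∩ {x | ∀ j ∈ J, φ x j = 0}) := by
    induction J using Finset.induction_on with
    | empty => simpa using hC
    | insert j J _ ih =>
      convert ih.inter_ker (l := (LinearMap.proj j).comp φ) (fun v hv => hφ v hv j trivial)
        using 1
      ext x
      simp only [Finset.forall_mem_insert, Set.mem_inter_iff, Set.mem_ofPred_eq,
        LinearMap.coe_comp, Function.comp_apply, LinearMap.coe_proj, Function.eval]
      tauto
  simpa [funext_iff] using key Finset.univ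

theorem IsLatticeFG.inter {ι : Type*} [Fintype ι] {C D : Set (ι → ℝ)}
    (hC : IsLatticeFG (intLattice ι) C) (hD : IsLatticeFG (intLattice ι) D) :
    IsLatticeFG (intLattice ι) (C ∩ D) := by
  have hK := (hC.prod hD).inter_ker_pi (LinearMap.fst ℝ _ _ - LinearMap.snd ℝ _ _)
    fun v hv => show v.1 - v.2 ∈ intLattice ι from sub_mem hv.1 hv.2
  convert hK.image (LinearMap.fst ℝ _ _) fun v hv => hv.1 using 1
  ext x
  constructor
  · rintro ⟨hxC, hxD⟩
    exact ⟨(x, x), ⟨⟨hxC, hxD⟩, by simp⟩, rfl⟩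
  · rintro ⟨⟨y, z⟩, ⟨⟨hy, hz⟩, hyz⟩, rfl⟩
    obtain rfl : y = z := sub_eq_zero.1 hyz
    exact ⟨hy, hz⟩

end LatticeCones

theorem isRatPolyCone_iff {d : ℕ} {σ : Set (Fin d → ℝ)} :
    IsRatPolyCone σ ↔ IsLatticeFG (intLattice (Fin d)) σ := by
  classical
  constructor
  · rintro ⟨k, g, rfl⟩
    refine ⟨Finset.univ.image fun i j => (g i j : ℝ), ?_, ?_⟩
    · rw [Finset.coe_image, Finset.coe_univ, Set.image_univ]
      rintro _ ⟨i, rfl⟩ j -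
      exact ⟨g i j, rfl⟩
    · rw [Finset.coe_image, Finset.coe_univ, Set.image_univ, coe_hull_range]
  · rintro ⟨s, hs, rfl⟩
    choose g hg using fun (i : Fin s.card) (j : Fin d) => hs (s.equivFin.symm i).2 j trivial
    refine ⟨s.card, g, ?_⟩
    have hgen : (fun i j => (g i j : ℝ)) = fun i => (s.equivFin.symm i : Fin d → ℝ) := by
      funext i j
      exact hg i j
    have hrange : Set.range (fun i => (s.equivFin.symm i : Fin d → ℝ)) = s :=
      (s.equivFin.symm.surjective.range_comp Subtype.val).trans Subtype.range_coe
    refine Eq.trans ?_ (coe_hull_range fun i j => (g i j : ℝ))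
    rw [hgen, hrange]

theorem IsFaceOfCone.inter_right {d : ℕ} {τ σ : Set (Fin d → ℝ)} (h : IsFaceOfCone τ σ)
    (W : Set (Fin d → ℝ)) : IsFaceOfCone (τ ∩ W) (σ ∩ W) := by
  obtain ⟨l, hl, rfl⟩ := h
  refine ⟨l, fun x hx => hl x hx.1, ?_⟩
  ext x
  simp only [Set.mem_inter_iff, Set.mem_ofPred_eq]
  tauto

/-- restricting a complete fan `Σ` to a rational linear subspace `W = N″_ℝ`
yields a complete fan `Σ″ = { σ ∩ W }` in `W`: each `σ ∩ W` is a rational polyhedral cone,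
pairwise intersections of members are common faces, and the union of all members is `W`. -/
theorem stmt16 {d : ℕ} (F : Finset (Set (Fin d → ℝ))) (hF : IsCompleteFan F)
    (W : Submodule ℝ (Fin d → ℝ))
    (hW : ∃ (k : ℕ) (w : Fin k → (Fin d → ℤ)),
      W = Submodule.span ℝ (Set.range fun i => (fun j => ((w i j : ℝ)) : Fin d → ℝ))) :
    (∀ σ ∈ F, IsRatPolyCone (σ ∩ (W : Set (Fin d → ℝ)))) ∧
    (∀ σ ∈ F, ∀ τ ∈ F,
      IsFaceOfCone ((σ ∩ (W : Set (Fin d → ℝ))) ∩ (τ ∩ (W : Set (Fin d → ℝ))))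
        (σ ∩ (W : Set (Fin d → ℝ))) ∧
      IsFaceOfCone ((σ ∩ (W : Set (Fin d → ℝ))) ∩ (τ ∩ (W : Set (Fin d → ℝ))))
        (τ ∩ (W : Set (Fin d → ℝ)))) ∧
    (⋃ σ ∈ F, (σ ∩ (W : Set (Fin d → ℝ)))) = (W : Set (Fin d → ℝ)) := by
  obtain ⟨k, w, rfl⟩ := hW
  refine ⟨fun σ hσ => ?_, fun σ hσ τ hτ => ?_, ?_⟩
  · have hWfg := isLatticeFG_span_range (Λ := intLattice (Fin d)) _ fun i j _ => ⟨w i j, rfl⟩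
    exact isRatPolyCone_iff.2 ((isRatPolyCone_iff.1 (hF.rat σ hσ)).inter hWfg)
  · rw [← Set.inter_inter_distrib_right]
    obtain ⟨hσ', hτ'⟩ := hF.inter_face σ hσ τ hτ
    exact ⟨hσ'.inter_right _, hτ'.inter_right _⟩
  · rw [← Set.iUnion₂_inter, hF.covers, Set.univ_inter]
end

section
/- Let f be a function holomorphic in the closed strip a ≤ Re(s) ≤ b in ℂ satisfying |f(s)| ≤ c₁ e^{|Im(s)|^{c₂}} in the strip for some constants c₁, c₂ > 0, together with the boundary bounds |f(a+it)| ≤ M_a (1+|t|)^{δ} and |f(b+it)| ≤ M_b for all t ∈ ℝ, where M_a, M_b > 0 and δ ≥ 0. Then for all a ≤ σ ≤ b and t ∈ ℝ: |f(σ+it)| ≤ M_b^{(σ−a)/(b−a)} · ( M_a (1+|t|)^{δ} )^{(b−σ)/(b−a)} · C, for a constant C depending only on a, b, δ. -/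
/-!
Dividing `f` by `(s - (a - 1) - i t)^δ`, which has modulus at least `1` on the strip, turns the
polynomial bound on the left edge into the constant `Ma (2 (1 + |t|))^δ` while keeping the bound
`Mb` on the right edge. Growth of finite order is far below the `exp (B exp (c |Im s|))` allowed
by Phragmén–Lindelöf, so the quotient is bounded on the strip, and Hadamard's three lines theorem
interpolates the two edge bounds. At `s = σ + i t` the divisor is the real number `σ - a + 1`,
whose `δ`-th power is at most `(1 + b - a)^δ`.
-/

open Complex Filter Set Asymptotics

section Strip

variable {E : Type*} [NormedAddCommGroup E] {f : ℂ → E} {a b c₁ c₂ : ℝ}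

lemma isBigO_exp_exp_of_norm_le_rpow_growth (hab : a < b)
    (hgrow : ∀ z ∈ re ⁻¹' Ioo a b, ‖f z‖ ≤ c₁ * Real.exp (|z.im| ^ c₂)) :
    ∃ c < Real.pi / (b - a), ∃ B,
      f =O[comap (_root_.abs ∘ im) atTop ⊓ 𝓟 (re ⁻¹' Ioo a b)]
        fun z ↦ Real.exp (B * Real.exp (c * |z.im|)) := by
  have hc : 0 < Real.pi / (2 * (b - a)) := by have := sub_pos.2 hab; positivity
  refine ⟨Real.pi / (2 * (b - a)), by gcongr; linarith [sub_pos.2 hab], 1,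
    IsBigO.of_bound |c₁| ?_⟩
  have hpow : ∀ᶠ z in comap (_root_.abs ∘ im) atTop,
      |z.im| ^ c₂ ≤ Real.exp (Real.pi / (2 * (b - a)) * |z.im|) := by
    refine ((isLittleO_rpow_exp_pos_mul_atTop c₂ hc).bound one_pos).comap _ |>.mono ?_
    intro z hz
    simpa [abs_of_nonneg (Real.rpow_nonneg (abs_nonneg _) _)] using hz
  filter_upwards [hpow.filter_mono inf_le_left, mem_inf_of_right (mem_principal_self _)]
    with z hz hzU
  calc ‖f z‖ ≤ c₁ * Real.exp (|z.im| ^ c₂) := hgrow z hzU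
    _ ≤ |c₁| * Real.exp (|z.im| ^ c₂) := by gcongr; exact le_abs_self _
    _ ≤ |c₁| * ‖Real.exp (1 * Real.exp (Real.pi / (2 * (b - a)) * |z.im|))‖ := by
      rw [Real.norm_eq_abs, Real.abs_exp, one_mul]; gcongr

variable [NormedSpace ℂ E]

lemma norm_le_of_norm_le_rpow_growth {C : ℝ} {z : ℂ} (hab : a < b)
    (hd : DiffContOnCl ℂ f (re ⁻¹' Ioo a b))
    (hgrow : ∀ z ∈ re ⁻¹' Ioo a b, ‖f z‖ ≤ c₁ * Real.exp (|z.im| ^ c₂))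
    (hle_a : ∀ z : ℂ, z.re = a → ‖f z‖ ≤ C) (hle_b : ∀ z : ℂ, z.re = b → ‖f z‖ ≤ C)
    (hza : a ≤ z.re) (hzb : z.re ≤ b) : ‖f z‖ ≤ C :=
  PhragmenLindelof.vertical_strip hd (isBigO_exp_exp_of_norm_le_rpow_growth hab hgrow)
    hle_a hle_b hza hzb

lemma norm_le_interp_of_norm_le_rpow_growth {A B : ℝ} {z : ℂ} (hab : a < b)
    (hd : DiffContOnCl ℂ f (re ⁻¹' Ioo a b))
    (hgrow : ∀ z ∈ re ⁻¹' Ioo a b, ‖f z‖ ≤ c₁ * Real.exp (|z.im| ^ c₂))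
    (hle_a : ∀ z : ℂ, z.re = a → ‖f z‖ ≤ A) (hle_b : ∀ z : ℂ, z.re = b → ‖f z‖ ≤ B)
    (hza : a ≤ z.re) (hzb : z.re ≤ b) :
    ‖f z‖ ≤ A ^ ((b - z.re) / (b - a)) * B ^ ((z.re - a) / (b - a)) := by
  have hbdd : BddAbove ((norm ∘ f) '' re ⁻¹' Icc a b) := by
    refine ⟨max A B, ?_⟩
    rintro _ ⟨w, ⟨hwa, hwb⟩, rfl⟩
    exact norm_le_of_norm_le_rpow_growth hab hd hgrow
      (fun z hz ↦ (hle_a z hz).trans (le_max_left _ _))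
      (fun z hz ↦ (hle_b z hz).trans (le_max_right _ _)) hwa hwb
  have h := HadamardThreeLines.norm_le_interp_of_mem_verticalClosedStrip' hab ⟨hza, hzb⟩ hd hbdd
    hle_a hle_b
  have hexp : 1 - (z.re - a) / (b - a) = (b - z.re) / (b - a) := by
    field_simp [(sub_pos.2 hab).ne']; ring
  rwa [hexp] at h

end Strip

lemma one_add_abs_le_mul_one_add_abs_sub (y t : ℝ) : 1 + |y| ≤ (1 + |t|) * (1 + |y - t|) := by
  have : |y| ≤ |t| + |y - t| := by simpa using abs_add_le t (y - t)
  nlinarith [abs_nonneg t, abs_nonneg (y - t)]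

lemma one_add_abs_im_le_two_mul_norm {w : ℂ} (hw : 1 ≤ w.re) : 1 + |w.im| ≤ 2 * ‖w‖ := by
  linarith [hw.trans (re_le_norm w), abs_im_le_norm w]

lemma norm_div_cpow_le_norm {w : ℂ} {δ : ℝ} (x : ℂ) (hw : 1 ≤ w.re) (hδ : 0 ≤ δ) :
    ‖x / w ^ (δ : ℂ)‖ ≤ ‖x‖ := by
  rw [norm_div, norm_cpow_real]
  exact div_le_self (norm_nonneg x) (Real.one_le_rpow (hw.trans (re_le_norm w)) hδ)

lemma norm_div_cpow_le_of_norm_le_one_add_abs_rpow {w x : ℂ} {t δ M : ℝ} (hw : w.re = 1)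
    (hδ : 0 ≤ δ) (hM : 0 ≤ M) (hx : ‖x‖ ≤ M * (1 + |w.im + t|) ^ δ) :
    ‖x / w ^ (δ : ℂ)‖ ≤ M * (2 * (1 + |t|)) ^ δ := by
  have hw_norm : 0 < ‖w‖ := one_pos.trans_le (hw.symm.le.trans (re_le_norm w))
  rw [norm_div, norm_cpow_real]
  refine div_le_of_le_mul₀ (by positivity) (by positivity) (hx.trans ?_)
  rw [mul_assoc, ← Real.mul_rpow (by positivity) hw_norm.le]
  gcongr
  calc 1 + |w.im + t| ≤ (1 + |t|) * (1 + |w.im|) := by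
        simpa using one_add_abs_le_mul_one_add_abs_sub (w.im + t) t
    _ ≤ (1 + |t|) * (2 * ‖w‖) := by
        gcongr; exact one_add_abs_im_le_two_mul_norm hw.symm.le
    _ = 2 * (1 + |t|) * ‖w‖ := by ring

lemma diffContOnCl_div_sub_cpow {f : ℂ → ℂ} {a b : ℝ} {p : ℂ} (hp : p.re < a)
    (hf : DifferentiableOn ℂ f (re ⁻¹' Icc a b)) (r : ℂ) :
    DiffContOnCl ℂ (fun s ↦ f s / (s - p) ^ r) (re ⁻¹' Ioo a b) := by
  have hslit : ∀ s ∈ re ⁻¹' Icc a b, s - p ∈ slitPlane := fun s hs ↦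
    Or.inl (by simpa using hp.trans_le hs.1)
  have hg : DifferentiableOn ℂ (fun s ↦ f s / (s - p) ^ r) (re ⁻¹' Icc a b) :=
    hf.div (fun s hs ↦ ((differentiableAt_id.sub_const p).cpow_const
      (hslit s hs)).differentiableWithinAt) fun s hs ↦
        (cpow_ne_zero_iff ..).2 (Or.inl (slitPlane_ne_zero (hslit s hs)))
  have hsub : re ⁻¹' Ioo a b ⊆ re ⁻¹' Icc a b := preimage_mono Ioo_subset_Icc_self
  exact ⟨hg.mono hsub, hg.continuousOn.mono
    (closure_minimal hsub (isClosed_Icc.preimage continuous_re))⟩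

theorem norm_le_interp_of_polynomial_left_bound {f : ℂ → ℂ} {a b δ c₁ c₂ Ma Mb σ : ℝ}
    (hab : a < b) (hδ : 0 ≤ δ) (hMa : 0 ≤ Ma) (hf : DifferentiableOn ℂ f (re ⁻¹' Icc a b))
    (hgrow : ∀ s ∈ re ⁻¹' Icc a b, ‖f s‖ ≤ c₁ * Real.exp (|s.im| ^ c₂))
    (hfa : ∀ y : ℝ, ‖f (a + y * I)‖ ≤ Ma * (1 + |y|) ^ δ) (hfb : ∀ y : ℝ, ‖f (b + y * I)‖ ≤ Mb)
    (t : ℝ) (hσa : a ≤ σ) (hσb : σ ≤ b) :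
    ‖f (σ + t * I)‖ ≤ (Ma * (2 * (1 + |t|)) ^ δ) ^ ((b - σ) / (b - a)) *
      Mb ^ ((σ - a) / (b - a)) * (σ - a + 1) ^ δ := by
  set p : ℂ := (a - 1 : ℝ) + t * I
  have hp : p.re = a - 1 := by simp [p]
  have hfg (s : ℂ) (hs : a ≤ s.re) : ‖f s / (s - p) ^ (δ : ℂ)‖ ≤ ‖f s‖ :=
    norm_div_cpow_le_norm _ (by rw [sub_re, hp]; linarith) hδ
  have key := norm_le_interp_of_norm_le_rpow_growth (z := σ + t * I) hab
    (diffContOnCl_div_sub_cpow (by linarith) hf δ)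
    (fun s hs ↦ (hfg s hs.1.le).trans (hgrow s ⟨hs.1.le, hs.2.le⟩))
    (fun s hs ↦ norm_div_cpow_le_of_norm_le_one_add_abs_rpow (t := t) (by simp [p, hs]) hδ hMa
      (by simpa [p, ← hs, re_add_im] using hfa s.im))
    (fun s hs ↦ (hfg s (by linarith)).trans (by simpa [← hs, re_add_im] using hfb s.im))
    (by simpa using hσa) (by simpa using hσb)
  have hz : (σ + t * I : ℂ) - p = ((σ - a + 1 : ℝ) : ℂ) := by push_cast [p]; ring
  have hσ : 0 < σ - a + 1 := by linarith
  rw [hz, norm_div, norm_cpow_real, norm_real, Real.norm_of_nonneg hσ.le,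
    div_le_iff₀ (by positivity)] at key
  simpa using key

/-- Phragmén–Lindelöf / Rademacher convexity principle: there is a constant
`C = C(a,b,δ) > 0` such that every function `f` holomorphic in the closed strip
`a ≤ Re s ≤ b`, of at most finite-order growth `|f| ≤ c₁ e^{|Im s|^{c₂}}` there, and with
boundary bounds `|f(a+it)| ≤ M_a (1+|t|)^δ` and `|f(b+it)| ≤ M_b`, satisfies
`|f(σ+it)| ≤ M_b^{(σ-a)/(b-a)} (M_a (1+|t|)^δ)^{(b-σ)/(b-a)} C` in the strip. -/
theorem stmt18 (a b δ : ℝ) (hab : a < b) (hδ : 0 ≤ δ) :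
    ∃ C : ℝ, 0 < C ∧
      ∀ (f : ℂ → ℂ) (c₁ c₂ Ma Mb : ℝ), 0 < c₁ → 0 < c₂ → 0 < Ma → 0 < Mb →
        DifferentiableOn ℂ f {s : ℂ | a ≤ s.re ∧ s.re ≤ b} →
        (∀ s ∈ {s : ℂ | a ≤ s.re ∧ s.re ≤ b}, ‖f s‖ ≤ c₁ * Real.exp (|s.im| ^ c₂)) →
        (∀ t : ℝ, ‖f (a + t * I)‖ ≤ Ma * (1 + |t|) ^ δ) →
        (∀ t : ℝ, ‖f (b + t * I)‖ ≤ Mb) →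
        ∀ σ t : ℝ, a ≤ σ → σ ≤ b →
          ‖f (σ + t * I)‖ ≤
            Mb ^ ((σ - a) / (b - a)) * (Ma * (1 + |t|) ^ δ) ^ ((b - σ) / (b - a)) * C := by
  refine ⟨2 ^ δ * (1 + (b - a)) ^ δ, by positivity, ?_⟩
  intro f c₁ c₂ Ma Mb _ _ hMa _ hf hgrow hfa hfb σ t hσa hσb
  have h2 : (2 ^ δ : ℝ) ^ ((b - σ) / (b - a)) ≤ 2 ^ δ :=
    Real.rpow_le_self_of_one_le (Real.one_le_rpow one_le_two hδ)
      (div_le_one_of_le₀ (by linarith) (by linarith))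
  have hσ : (σ - a + 1) ^ δ ≤ (1 + (b - a)) ^ δ :=
    Real.rpow_le_rpow (by linarith) (by linarith) hδ
  calc ‖f (σ + t * I)‖
      ≤ (Ma * (2 * (1 + |t|)) ^ δ) ^ ((b - σ) / (b - a)) * Mb ^ ((σ - a) / (b - a))
          * (σ - a + 1) ^ δ :=
        norm_le_interp_of_polynomial_left_bound hab hδ hMa.le hf hgrow hfa hfb t hσa hσb
    _ = Mb ^ ((σ - a) / (b - a)) * (Ma * (1 + |t|) ^ δ) ^ ((b - σ) / (b - a))
          * ((2 ^ δ) ^ ((b - σ) / (b - a)) * (σ - a + 1) ^ δ) := by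
        rw [Real.mul_rpow two_pos.le (by positivity), mul_left_comm,
          Real.mul_rpow (by positivity) (by positivity)]
        ring
    _ ≤ _ := by gcongr _ * ?_; exact mul_le_mul h2 hσ (by positivity) (by positivity)
end
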